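/- arXiv:math/0405024 — 7 statements merged into one kernel-verified Lean document; each statement's English description precedes it below -/
import Mathlib

section
/- Assume f^{(p+3)}(y) > 0 and f^{(p+4)}(y) > 0 for all y ∈ ℝ. Suppose that for every pair of points P, Q ∈ ℝ^m there exists a linear isomorphism φ : ℝ^m → ℝ^m such that φ(∇^k𝓡_P(ξ₁, ξ₂; η₁, …, η_k)ξ₃) = ∇^k𝓡_Q(φξ₁, φξ₂; φη₁, …, φη_k)(φξ₃) for all 0 ≤ k ≤ p+3 and all ξ_1, ξ_2, ξ_3, η_1, …, η_k ∈ ℝ^m (i.e. M_{2p+6,f} is affine (p+3)-curvature homogeneous). Then the function α : ℝ → ℝ, α(y) = f^{(p+3)}(y) f^{(p+5)}(y) / (f^{(p+4)}(y))², is constant. -/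
/- Setting of Gilkey–Nikčević: m = 2p+6, coordinates
   (x, y, z_0, …, z_p, x̄, ȳ, z̄_0, …, z̄_p) on ℝ^m. -/

/-- The model space ℝ^{2p+6}. -/
abbrev Vp (p : ℕ) := Fin (2*p+6) → ℝ

/-- index of the coordinate x -/
def ix (p : ℕ) : Fin (2*p+6) := ⟨0, by omega⟩
/-- index of the coordinate y -/
def iy (p : ℕ) : Fin (2*p+6) := ⟨1, by omega⟩
/-- index of the coordinate z_i -/
def iz (p : ℕ) (i : Fin (p+1)) : Fin (2*p+6) := ⟨2 + i.1, by have := i.2; omega⟩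
/-- index of the coordinate x̄ -/
def ixb (p : ℕ) : Fin (2*p+6) := ⟨p+3, by omega⟩
/-- index of the coordinate ȳ -/
def iyb (p : ℕ) : Fin (2*p+6) := ⟨p+4, by omega⟩
/-- index of the coordinate z̄_i -/
def izb (p : ℕ) (i : Fin (p+1)) : Fin (2*p+6) := ⟨p+5+i.1, by have := i.2; omega⟩

/-- F(y, z⃗) = f(y) + Σ_{i=0}^p y^{i+1} z_i, evaluated at the coordinates of the point P. -/
noncomputable def FF (p : ℕ) (f : ℝ → ℝ) (P : Vp p) : ℝ :=
  f (P (iy p)) + ∑ i : Fin (p+1), (P (iy p))^(i.1+1) * P (iz p i)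

/-- The symmetric bilinear form g_P on ℝ^{2p+6}: the only nonzero components on
basis vectors are g(∂x,∂x̄)=g(∂y,∂ȳ)=g(∂z_i,∂z̄_i)=1 and g(∂x,∂x) = -2F(y,z⃗). -/
noncomputable def gP (p : ℕ) (f : ℝ → ℝ) (P : Vp p) (u v : Vp p) : ℝ :=
  u (ix p) * v (ixb p) + u (ixb p) * v (ix p)
  + u (iy p) * v (iyb p) + u (iyb p) * v (iy p)
  + ∑ i : Fin (p+1), (u (iz p i) * v (izb p i) + u (izb p i) * v (iz p i))
  - 2 * FF p f P * (u (ix p) * v (ix p))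

/-- wedge component: (u ∧ v)_{ab} = u_a v_b - u_b v_a. -/
def wdg (p : ℕ) (a b : Fin (2*p+6)) (u v : Vp p) : ℝ := u a * v b - u b * v a

/-- The (4+k)-linear form ∇^kR_P on ℝ^{2p+6}: it is antisymmetric in arguments 1,2 and
in arguments 3,4, symmetric under interchanging the pair (1,2) with the pair (3,4),
and its only nonzero components on basis vectors up to these symmetries are
∇^kR_P(∂x,∂y,∂y,∂x;∂y,…,∂y) = f^{(k+2)}(y) + Σ_i (d/dy)^{k+2}(y^{i+1})·z_i,
∇^kR_P(∂x,∂y,∂z_i,∂x;∂y,…,∂y) = (d/dy)^{k+1}(y^{i+1}), and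
∇^kR_P(∂x,∂y,∂y,∂x;∂y,…,∂z_i,…,∂y) = (d/dy)^{k+1}(y^{i+1}) (∂z_i in one derivative slot).
This `def` is the unique multilinear map with these components, written out explicitly. -/
noncomputable def nR (p : ℕ) (f : ℝ → ℝ) (k : ℕ) (P : Vp p)
    (ξ₁ ξ₂ ξ₃ ξ₄ : Vp p) (η : Fin k → Vp p) : ℝ :=
  -(wdg p (ix p) (iy p) ξ₁ ξ₂ * wdg p (ix p) (iy p) ξ₃ ξ₄) *
    ((iteratedDeriv (k+2) f (P (iy p))
        + ∑ i : Fin (p+1), iteratedDeriv (k+2) (fun t => t^(i.1+1)) (P (iy p)) * P (iz p i))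
        * ∏ j : Fin k, η j (iy p)
      + ∑ i : Fin (p+1), iteratedDeriv (k+1) (fun t => t^(i.1+1)) (P (iy p)) *
          ∑ j : Fin k, η j (iz p i) * ∏ l ∈ Finset.univ.erase j, η l (iy p))
  - (∑ i : Fin (p+1), iteratedDeriv (k+1) (fun t => t^(i.1+1)) (P (iy p)) *
      (wdg p (ix p) (iy p) ξ₁ ξ₂ * wdg p (ix p) (iz p i) ξ₃ ξ₄
        + wdg p (ix p) (iz p i) ξ₁ ξ₂ * wdg p (ix p) (iy p) ξ₃ ξ₄)) * ∏ j : Fin k, η j (iy p)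


lemma iter_zero_fun (n : ℕ) : iteratedDeriv n (fun _ : ℝ => (0:ℝ)) = fun _ => 0 := by
  induction n with
  | zero => simp
  | succ n ih =>
    rw [iteratedDeriv_succ']
    have hd : deriv (fun _ : ℝ => (0:ℝ)) = fun _ : ℝ => (0:ℝ) := by funext t; simp
    rw [hd, ih]

lemma iter_pow_fun : ∀ (m n : ℕ), m < n → iteratedDeriv n (fun t : ℝ => t ^ m) = fun _ => 0 := by
  intro m
  induction m with
  | zero =>
    intro n hn
    obtain ⟨n', rfl⟩ := Nat.exists_eq_succ_of_ne_zero hn.ne'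
    rw [iteratedDeriv_succ']
    have hd : deriv (fun t : ℝ => t ^ 0) = fun _ : ℝ => (0:ℝ) := by funext t; simp
    rw [hd, iter_zero_fun]
  | succ m ih =>
    intro n hn
    obtain ⟨n', rfl⟩ := Nat.exists_eq_succ_of_ne_zero (by omega : n ≠ 0)
    rw [iteratedDeriv_succ']
    have hd : deriv (fun t : ℝ => t ^ (m+1)) = fun t : ℝ => ((m:ℝ)+1) * t ^ m := by
      funext t
      rw [deriv_pow_field]
      push_cast
      ring_nf
    rw [hd]
    funext y
    rw [← iteratedDerivWithin_univ,
      iteratedDerivWithin_const_mul (Set.mem_univ y) uniqueDiffOn_univ ((m:ℝ)+1)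
        (by fun_prop : ContDiffWithinAt ℝ n' (fun t : ℝ => t ^ m) Set.univ y),
      iteratedDerivWithin_univ, ih n' (by omega)]
    simp

lemma iter_pow {m n : ℕ} (h : m < n) (y : ℝ) : iteratedDeriv n (fun t : ℝ => t ^ m) y = 0 := by
  rw [iter_pow_fun m n h]


lemma nR_simp (p : ℕ) (f : ℝ → ℝ) (k : ℕ) (P : Vp p) (hk : p + 1 ≤ k)
    (ξ₁ ξ₂ ξ₃ ξ₄ : Vp p) (η : Fin k → Vp p) :
    nR p f k P ξ₁ ξ₂ ξ₃ ξ₄ η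
      = -(wdg p (ix p) (iy p) ξ₁ ξ₂ * wdg p (ix p) (iy p) ξ₃ ξ₄) *
          (iteratedDeriv (k+2) f (P (iy p)) * ∏ j : Fin k, η j (iy p)) := by
  have h1 : ∀ i : Fin (p+1), iteratedDeriv (k+2) (fun t : ℝ => t ^ (i.1+1)) (P (iy p)) = 0 :=
    fun i => iter_pow (by have := i.2; omega) _
  have h2 : ∀ i : Fin (p+1), iteratedDeriv (k+1) (fun t : ℝ => t ^ (i.1+1)) (P (iy p)) = 0 :=
    fun i => iter_pow (by have := i.2; omega) _
  simp only [nR, h1, h2, zero_mul, Finset.sum_const_zero, add_zero, mul_zero]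
  ring

/-- explicit curvature operator for orders k ≥ p+1 -/
noncomputable def myop (p : ℕ) (f : ℝ → ℝ) (k : ℕ) (P : Vp p)
    (ξ₁ ξ₂ : Vp p) (η : Fin k → Vp p) (ξ₃ : Vp p) : Vp p :=
  fun a => iteratedDeriv (k+2) f (P (iy p)) * wdg p (ix p) (iy p) ξ₁ ξ₂ *
    (∏ j : Fin k, η j (iy p)) *
    (ξ₃ (iy p) * (if a = ixb p then 1 else 0) - ξ₃ (ix p) * (if a = iyb p then 1 else 0))

lemma myop_prop (p : ℕ) (f : ℝ → ℝ) (k : ℕ) (P : Vp p) (hk : p + 1 ≤ k)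
    (ξ₁ ξ₂ : Vp p) (η : Fin k → Vp p) (ξ₃ ξ₄ : Vp p) :
    gP p f P (myop p f k P ξ₁ ξ₂ η ξ₃) ξ₄ = nR p f k P ξ₁ ξ₂ ξ₃ ξ₄ η := by
  have hxxb : ix p ≠ ixb p := Fin.ne_of_val_ne (show (0:ℕ) ≠ p+3 by omega)
  have hxyb : ix p ≠ iyb p := Fin.ne_of_val_ne (show (0:ℕ) ≠ p+4 by omega)
  have hyxb : iy p ≠ ixb p := Fin.ne_of_val_ne (show (1:ℕ) ≠ p+3 by omega)
  have hyyb : iy p ≠ iyb p := Fin.ne_of_val_ne (show (1:ℕ) ≠ p+4 by omega)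
  have hbb : ixb p ≠ iyb p := Fin.ne_of_val_ne (show p+3 ≠ p+4 by omega)
  have hbb' : iyb p ≠ ixb p := Fin.ne_of_val_ne (show p+4 ≠ p+3 by omega)
  have hz1 : ∀ i : Fin (p+1), iz p i ≠ ixb p := fun i =>
    Fin.ne_of_val_ne (show 2 + i.1 ≠ p+3 by have := i.2; omega)
  have hz2 : ∀ i : Fin (p+1), iz p i ≠ iyb p := fun i =>
    Fin.ne_of_val_ne (show 2 + i.1 ≠ p+4 by have := i.2; omega)
  have hz3 : ∀ i : Fin (p+1), izb p i ≠ ixb p := fun i =>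
    Fin.ne_of_val_ne (show p+5 + i.1 ≠ p+3 by omega)
  have hz4 : ∀ i : Fin (p+1), izb p i ≠ iyb p := fun i =>
    Fin.ne_of_val_ne (show p+5 + i.1 ≠ p+4 by omega)
  rw [nR_simp p f k P hk]
  simp only [gP, myop, if_neg hxxb, if_neg hxyb, if_neg hyxb, if_neg hyyb,
    if_neg hbb, if_neg hbb', if_pos rfl, if_true,
    show ∀ i : Fin (p+1), (if iz p i = ixb p then (1:ℝ) else 0) = 0 from fun i => if_neg (hz1 i),
    show ∀ i : Fin (p+1), (if iz p i = iyb p then (1:ℝ) else 0) = 0 from fun i => if_neg (hz2 i),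
    show ∀ i : Fin (p+1), (if izb p i = ixb p then (1:ℝ) else 0) = 0 from fun i => if_neg (hz3 i),
    show ∀ i : Fin (p+1), (if izb p i = iyb p then (1:ℝ) else 0) = 0 from fun i => if_neg (hz4 i),
    mul_zero, zero_mul, sub_zero, zero_sub, add_zero, zero_add, mul_one,
    Finset.sum_const_zero]
  unfold wdg
  ring

/-- basis vector -/
def Ee (p : ℕ) (a : Fin (2*p+6)) : Vp p := fun b => if b = a then 1 else 0

/-- assume f^{(p+3)} > 0 and f^{(p+4)} > 0 everywhere.  If M_{2p+6,f}
is affine (p+3)-curvature homogeneous — i.e. for every pair of points P, Q there is a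
linear isomorphism φ of ℝ^m intertwining the curvature operators ∇^k𝓡_P and ∇^k𝓡_Q
(the unique operators with g(∇^k𝓡(ξ₁,ξ₂;η⃗)ξ₃, ξ₄) = ∇^kR(ξ₁,ξ₂,ξ₃,ξ₄;η⃗)) for all
0 ≤ k ≤ p+3 — then α(y) = f^{(p+3)}(y) f^{(p+5)}(y) / (f^{(p+4)}(y))² is constant. -/
theorem affine_homogeneous_implies_alpha_constant (p : ℕ) (f : ℝ → ℝ)
    (hf : ContDiff ℝ (⊤ : ℕ∞) f)
    (hf3 : ∀ y : ℝ, 0 < iteratedDeriv (p+3) f y)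
    (hf4 : ∀ y : ℝ, 0 < iteratedDeriv (p+4) f y)
    (hhom : ∀ P Q : Vp p, ∃ φ : Vp p ≃ₗ[ℝ] Vp p, ∀ k : ℕ, k ≤ p+3 →
      ∀ (opP opQ : Vp p → Vp p → (Fin k → Vp p) → Vp p → Vp p),
        (∀ (ξ₁ ξ₂ : Vp p) (η : Fin k → Vp p) (ξ₃ ξ₄ : Vp p),
          gP p f P (opP ξ₁ ξ₂ η ξ₃) ξ₄ = nR p f k P ξ₁ ξ₂ ξ₃ ξ₄ η) →
        (∀ (ξ₁ ξ₂ : Vp p) (η : Fin k → Vp p) (ξ₃ ξ₄ : Vp p),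
          gP p f Q (opQ ξ₁ ξ₂ η ξ₃) ξ₄ = nR p f k Q ξ₁ ξ₂ ξ₃ ξ₄ η) →
        ∀ (ξ₁ ξ₂ : Vp p) (η : Fin k → Vp p) (ξ₃ : Vp p),
          φ (opP ξ₁ ξ₂ η ξ₃) = opQ (φ ξ₁) (φ ξ₂) (fun j => φ (η j)) (φ ξ₃)) :
    ∀ y₁ y₂ : ℝ,
      iteratedDeriv (p+3) f y₁ * iteratedDeriv (p+5) f y₁ / (iteratedDeriv (p+4) f y₁)^2
      = iteratedDeriv (p+3) f y₂ * iteratedDeriv (p+5) f y₂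
          / (iteratedDeriv (p+4) f y₂)^2 := by
  intro y₁ y₂
  have hxy : ix p ≠ iy p := Fin.ne_of_val_ne (show (0:ℕ) ≠ 1 by omega)
  set P : Vp p := fun a => if a = iy p then y₁ else 0 with hPdef
  set Q : Vp p := fun a => if a = iy p then y₂ else 0 with hQdef
  have hPy : P (iy p) = y₁ := if_pos rfl
  have hQy : Q (iy p) = y₂ := if_pos rfl
  obtain ⟨φ, hφ⟩ := hhom P Q
  set u : Vp p := φ (Ee p (ix p)) with hu
  set v : Vp p := φ (Ee p (iy p)) with hv
  set V : Vp p := φ (Ee p (ixb p)) with hV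
  set w : ℝ := u (ix p) * v (iy p) - u (iy p) * v (ix p) with hw
  set s : ℝ := v (iy p) with hs
  set t : ℝ := v (ix p) with ht
  -- key scalar equations
  have key : ∀ k : ℕ, p+1 ≤ k → k ≤ p+3 → ∀ a : Fin (2*p+6),
      iteratedDeriv (k+2) f y₁ * V a
        = iteratedDeriv (k+2) f y₂ *
            (w * s^k * (s * (if a = ixb p then 1 else 0)
              - t * (if a = iyb p then 1 else 0))) := by
    intro k hk1 hk2 a
    have h := hφ k hk2 (myop p f k P) (myop p f k Q)
      (fun ξ₁ ξ₂ η ξ₃ ξ₄ => myop_prop p f k P hk1 ξ₁ ξ₂ η ξ₃ ξ₄)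
      (fun ξ₁ ξ₂ η ξ₃ ξ₄ => myop_prop p f k Q hk1 ξ₁ ξ₂ η ξ₃ ξ₄)
      (Ee p (ix p)) (Ee p (iy p)) (fun _ => Ee p (iy p)) (Ee p (iy p))
    have hL : myop p f k P (Ee p (ix p)) (Ee p (iy p)) (fun _ => Ee p (iy p)) (Ee p (iy p))
        = iteratedDeriv (k+2) f y₁ • Ee p (ixb p) := by
      funext b
      simp only [myop, wdg, Ee, Pi.smul_apply, smul_eq_mul, hPy,
        if_pos rfl, if_neg hxy, if_neg (Ne.symm hxy)]
      simp [Finset.prod_const]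
    rw [hL, map_smul] at h
    have h2 := congrFun h a
    simp only [Pi.smul_apply, smul_eq_mul] at h2
    rw [h2]
    simp only [myop, wdg, hQy, ← hu, ← hv, ← hw, ← hs, ← ht]
    rw [Finset.prod_const]
    simp only [Finset.card_univ, Fintype.card_fin]
    ring
  -- V ≠ 0, pick a coordinate
  have hEne : Ee p (ixb p) ≠ 0 := by
    intro h
    have := congrFun h (ixb p)
    simp [Ee] at this
  have hVne : V ≠ 0 := fun h => hEne (by
    have := φ.map_eq_zero_iff.mp (hV ▸ h)
    exact this)
  obtain ⟨a, ha⟩ : ∃ a, V a ≠ 0 := by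
    by_contra h
    push_neg at h
    exact hVne (funext fun b => h b)
  set xa : ℝ := s * (if a = ixb p then 1 else 0) - t * (if a = iyb p then 1 else 0) with hxa
  have E0 : iteratedDeriv (p+3) f y₁ * V a = iteratedDeriv (p+3) f y₂ * (w * s^(p+1) * xa) :=
    key (p+1) le_rfl (by omega) a
  have E1 : iteratedDeriv (p+4) f y₁ * V a = iteratedDeriv (p+4) f y₂ * (w * s^(p+2) * xa) :=
    key (p+2) (by omega) (by omega) a
  have E2 : iteratedDeriv (p+5) f y₁ * V a = iteratedDeriv (p+5) f y₂ * (w * s^(p+3) * xa) :=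
    key (p+3) (by omega) le_rfl a
  have hA0 := (hf3 y₁).ne'
  have hA1 := (hf4 y₁).ne'
  have hB1 := (hf4 y₂).ne'
  have hprod : w * s^(p+1) * xa ≠ 0 := by
    intro h
    have : iteratedDeriv (p+3) f y₁ * V a = 0 := by rw [E0, h, mul_zero]
    exact (mul_ne_zero hA0 ha) this
  have hs0 : s ≠ 0 := by
    intro h
    apply hprod
    rw [h, zero_pow (by omega : p+1 ≠ 0)]
    ring
  have hw0 : w ≠ 0 := fun h => hprod (by rw [h]; ring)
  have hxa0 : xa ≠ 0 := fun h => hprod (by rw [h]; ring)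
  rw [div_eq_div_iff (pow_ne_zero 2 hA1) (pow_ne_zero 2 hB1)]
  have hK : (V a)^2 * (s^(p+2))^2 * (w * xa)^2 ≠ 0 :=
    mul_ne_zero (mul_ne_zero (pow_ne_zero 2 ha) (pow_ne_zero 2 (pow_ne_zero _ hs0)))
      (pow_ne_zero 2 (mul_ne_zero hw0 hxa0))
  apply mul_right_cancel₀ hK
  have P02 : (iteratedDeriv (p+3) f y₁ * V a) * (iteratedDeriv (p+5) f y₁ * V a)
      = (iteratedDeriv (p+3) f y₂ * (w * s^(p+1) * xa))
          * (iteratedDeriv (p+5) f y₂ * (w * s^(p+3) * xa)) := by rw [E0, E2]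
  have P11 : (iteratedDeriv (p+4) f y₁ * V a) * (iteratedDeriv (p+4) f y₁ * V a)
      = (iteratedDeriv (p+4) f y₂ * (w * s^(p+2) * xa))
          * (iteratedDeriv (p+4) f y₂ * (w * s^(p+2) * xa)) := by rw [E1]
  linear_combination (iteratedDeriv (p+4) f y₂)^2 * (s^(p+2))^2 * w^2 * xa^2 * P02
    - iteratedDeriv (p+3) f y₂ * iteratedDeriv (p+5) f y₂ * s^(p+1) * s^(p+3) * w^2 * xa^2 * P11
end

section
/- Let f(y) = e^y. Then for every integer k ≥ 0 and every pair of points P, Q ∈ ℝ^m there exists a linear isomorphism φ : ℝ^m → ℝ^m such that g_Q(φu, φv) = g_P(u, v) for all u, v ∈ ℝ^m and ∇^jR_Q(φξ₁, …, φξ_{4+j}) = ∇^jR_P(ξ₁, …, ξ_{4+j}) for all 0 ≤ j ≤ k and all arguments. That is, M¹_{2p+6} = M_{2p+6, e^y} is k-curvature homogeneous for every k. -/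
/-!
`F` involves only `y` and `z`, and `∇ᵏR_P` is assembled from `∂_y^{k+2} F` and
`∂_y^{k+1} ∂_{z_i} F` at `P`. For `f = exp` and `s = y(P) - y(Q)` there is an affine change of
variables `T` of `(y, z)` with `T(P) = Q` and `e^s · (F ∘ T) = F + (affine in y)`: it shifts `y`
by `-s`, transforms `z` by the matrix re-expanding `y^{i+1} = ((y - s) + s)^{i+1}` in powers of
`y - s` (`shiftMatrix`, scaled by `e^{-s}`), and adds to `z` a multiple `ev` of `y`, found by
synthetic division by `X - y(Q)`, which cancels the remaining nonlinear terms. Hence the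
derivatives of order `≥ 2` at `Q`, pulled back by the linear part of `T`, are `e^{-s}` times those
at `P`. The map `φ` is that linear part on `(y, z)`, scales `x` by `e^{s/2}` to absorb `e^{-s}`,
acts on the barred coordinates by the contragredient so that the pairings `g(∂, ∂̄)` are kept,
and corrects `x̄` so that the term `g(∂x, ∂x) = -2F` is kept too.
-/

open Polynomial Matrix Finset

namespace Polynomial

theorem iteratedDeriv_eval {𝕜 : Type*} [NontriviallyNormedField 𝕜] (n : ℕ) (q : 𝕜[X]) :
    iteratedDeriv n (fun t => q.eval t) = fun t => (derivative^[n] q).eval t := by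
  induction n with
  | zero => rfl
  | succ n ih =>
    rw [iteratedDeriv_succ, ih, Function.iterate_succ_apply']
    funext t
    exact Polynomial.deriv _

theorem iterate_derivative_taylor {R : Type*} [CommSemiring R] (n : ℕ) (r : R) (q : R[X]) :
    derivative^[n] (taylor r q) = taylor r (derivative^[n] q) := by
  induction n generalizing q with
  | zero => rfl
  | succ n ih =>
    rw [Function.iterate_succ_apply, Function.iterate_succ_apply, ← ih]
    simp [taylor_apply, derivative_comp]

theorem iterate_derivative_X_sub_C_mul {R : Type*} [CommRing R] (n : ℕ) (b : R) (q : R[X]) :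
    derivative^[n + 1] ((X - C b) * q)
      = (X - C b) * derivative^[n + 1] q + (n + 1 : R[X]) * derivative^[n] q := by
  induction n with
  | zero =>
    simp only [zero_add, Function.iterate_one, derivative_mul, derivative_sub, derivative_X,
      derivative_C, sub_zero, one_mul, Nat.cast_zero, Function.iterate_zero, id_eq]
    ring
  | succ n ih =>
    rw [Function.iterate_succ_apply' _ (n + 1), ih, Function.iterate_succ_apply' _ (n + 1)]
    simp only [Function.iterate_succ_apply', derivative_add, derivative_mul, derivative_sub,
      derivative_X, derivative_C, sub_zero, one_mul, derivative_natCast, derivative_one, add_zero,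
      zero_mul, zero_add, Nat.cast_add, Nat.cast_one]
    ring

theorem eq_C_add_X_mul_ofFn_divX {R : Type*} [Semiring R] [DecidableEq R] {N : ℕ} (q : R[X])
    (hq : q.natDegree ≤ N + 1) : q = C (q.coeff 0) + X * ofFn (N + 1) (toFn (N + 1) (divX q)) := by
  rw [ofFn_comp_toFn_eq_id_of_natDegree_lt (by rw [natDegree_divX_eq_natDegree_tsub_one]; omega),
    add_comm, X_mul_divX_add]

end Polynomial

section PowDerivs

variable {p : ℕ}

noncomputable def powDerivs (p n : ℕ) (b : ℝ) : Fin (p + 1) → ℝ :=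
  fun i => iteratedDeriv n (fun t => t ^ (i.1 + 1)) b

theorem powDerivs_apply (n : ℕ) (b : ℝ) (i : Fin (p + 1)) :
    powDerivs p n b i = (derivative^[n] (X ^ (i.1 + 1))).eval b := by
  have h := congrFun (iteratedDeriv_eval n (X ^ (i.1 + 1))) b
  simp only [eval_pow, eval_X] at h
  exact h

theorem powDerivs_dotProduct (n : ℕ) (b : ℝ) (z : Fin (p + 1) → ℝ) :
    powDerivs p n b ⬝ᵥ z = (derivative^[n] (X * ofFn (p + 1) z)).eval b := by
  simp only [dotProduct, powDerivs_apply, ofFn_eq_sum_monomial, ← C_mul_X_pow_eq_monomial, mul_sum,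
    iterate_derivative_sum, eval_finsetSum]
  refine sum_congr rfl fun i _ => ?_
  rw [mul_left_comm, ← pow_succ', iterate_derivative_C_mul, eval_mul, eval_C, mul_comm]

noncomputable def shiftMatrix (p : ℕ) (s : ℝ) : Matrix (Fin (p + 1)) (Fin (p + 1)) ℝ :=
  Matrix.of fun i j => ((X + C s) ^ (i.1 + 1)).coeff (j.1 + 1)

theorem det_shiftMatrix (s : ℝ) : (shiftMatrix p s).det = 1 := by
  rw [det_of_isLowerTriangular _ fun i j (hij : i < j) => ?_]
  · refine prod_eq_one fun i _ => ?_
    simp [shiftMatrix, coeff_X_add_C_pow]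
  · simp [shiftMatrix, coeff_X_add_C_pow, Nat.choose_eq_zero_of_lt (Nat.succ_lt_succ hij)]

theorem shiftMatrix_mulVec_powDerivs (n : ℕ) (b s : ℝ) :
    shiftMatrix p s *ᵥ powDerivs p (n + 1) b = powDerivs p (n + 1) (b + s) := by
  funext i
  set R : ℝ[X] := (X + C s) ^ (i.1 + 1)
  have hrow : (fun j => shiftMatrix p s i j) = toFn (p + 1) (divX R) := by
    funext j
    simp [shiftMatrix, toFn, coeff_divX, R]
  have hR : X * ofFn (p + 1) (toFn (p + 1) (divX R)) = R - C (R.coeff 0) := by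
    nth_rw 2 [eq_C_add_X_mul_ofFn_divX (N := p) R (by rw [natDegree_pow_X_add_C]; omega)]
    ring
  rw [mulVec, dotProduct_comm, hrow, powDerivs_dotProduct, hR, iterate_derivative_sub,
    iterate_derivative_C (by omega), sub_zero, powDerivs_apply, ← taylor_eval,
    ← iterate_derivative_taylor, taylor_X_pow]

noncomputable def syntheticQuotient (b : ℝ) (q : Fin (p + 1) → ℝ) : Fin (p + 1) → ℝ :=
  toFn (p + 1) (ofFn (p + 1) q /ₘ (X - C b))

theorem powDerivs_dotProduct_eq_mul_syntheticQuotient (n : ℕ) (b : ℝ) (q : Fin (p + 1) → ℝ) :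
    powDerivs p (n + 2) b ⬝ᵥ q = (n + 2) * (powDerivs p (n + 1) b ⬝ᵥ syntheticQuotient b q) := by
  set E := ofFn (p + 1) q /ₘ (X - C b)
  have hE : ofFn (p + 1) (toFn (p + 1) E) = E := by
    refine ofFn_comp_toFn_eq_id_of_natDegree_lt ?_
    rw [natDegree_divByMonic _ (monic_X_sub_C b)]
    have := ofFn_natDegree_lt (Nat.le_add_left 1 p) q
    omega
  have hdiv : X * ofFn (p + 1) q = (X - C b) * (X * E) + C ((ofFn (p + 1) q).eval b) * X := by
    conv_lhs => rw [← modByMonic_add_div (ofFn (p + 1) q) (X - C b), modByMonic_X_sub_C_eq_C_eval]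
    ring
  rw [powDerivs_dotProduct, powDerivs_dotProduct, syntheticQuotient, hE, hdiv, iterate_map_add,
    iterate_derivative_X_sub_C_mul, iterate_derivative_C_mul, iterate_derivative_X (by omega)]
  simp only [mul_zero, add_zero, eval_add, eval_mul, eval_sub, eval_X, eval_C, sub_self, zero_mul,
    zero_add, eval_natCast, eval_one]
  push_cast
  ring

end PowDerivs

theorem vecMul_dotProduct_nonsing_inv_mulVec {n K : Type*} [Fintype n] [DecidableEq n]
    [CommRing K] (A : Matrix n n K) (hA : IsUnit A.det) (v w : n → K) :
    (v ᵥ* A) ⬝ᵥ (A⁻¹ *ᵥ w) = v ⬝ᵥ w := by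
  rw [dotProduct_mulVec, vecMul_vecMul, mul_nonsing_inv A hA, vecMul_one]

section FrameChange

variable {p : ℕ}

def zCoords : Vp p →ₗ[ℝ] Fin (p + 1) → ℝ := LinearMap.funLeft ℝ ℝ (iz p)

def zbCoords : Vp p →ₗ[ℝ] Fin (p + 1) → ℝ := LinearMap.funLeft ℝ ℝ (izb p)

theorem Vp.ext_coords {u v : Vp p} (hx : u (ix p) = v (ix p)) (hy : u (iy p) = v (iy p))
    (hz : zCoords u = zCoords v) (hxb : u (ixb p) = v (ixb p)) (hyb : u (iyb p) = v (iyb p))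
    (hzb : zbCoords u = zbCoords v) : u = v := by
  funext ⟨a, ha⟩
  by_cases h0 : a = 0
  · subst h0; exact hx
  by_cases h1 : a = 1
  · subst h1; exact hy
  by_cases h2 : a < p + 3
  · have := congrFun hz ⟨a - 2, by omega⟩
    simp only [zCoords, LinearMap.funLeft_apply, iz] at this
    convert this using 3 <;> omega
  by_cases h3 : a = p + 3
  · subst h3; exact hxb
  by_cases h4 : a = p + 4
  · subst h4; exact hyb
  have := congrFun hzb ⟨a - (p + 5), by omega⟩
  simp only [zbCoords, LinearMap.funLeft_apply, izb] at this
  convert this using 3 <;> omega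

theorem gP_eq (f : ℝ → ℝ) (P u v : Vp p) :
    gP p f P u v = u (ix p) * v (ixb p) + u (ixb p) * v (ix p) + u (iy p) * v (iyb p)
      + u (iyb p) * v (iy p) + zCoords u ⬝ᵥ zbCoords v + zbCoords u ⬝ᵥ zCoords v
      - 2 * FF p f P * (u (ix p) * v (ix p)) := by
  simp only [gP, sum_add_distrib, add_assoc]
  rfl

/-- In coordinates `(x, y, z, x̄, ȳ, z̄)` this is
`(c x, y, y ev + z A, c⁻¹ x̄ + r x, ȳ - ev ⬝ A⁻¹ z̄, A⁻¹ z̄)`. -/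
noncomputable def frameChange (c r : ℝ) (ev : Fin (p + 1) → ℝ)
    (A : Matrix (Fin (p + 1)) (Fin (p + 1)) ℝ) : Vp p →ₗ[ℝ] Vp p where
  toFun u a :=
    if a.1 = 0 then c * u (ix p)
    else if a.1 = 1 then u (iy p)
    else if h : a.1 < p + 3 then (u (iy p) • ev + zCoords u ᵥ* A) ⟨a.1 - 2, by omega⟩
    else if a.1 = p + 3 then c⁻¹ * u (ixb p) + r * u (ix p)
    else if a.1 = p + 4 then u (iyb p) - ev ⬝ᵥ (A⁻¹ *ᵥ zbCoords u)
    else (A⁻¹ *ᵥ zbCoords u) ⟨a.1 - (p + 5), by omega⟩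
  map_add' u v := by
    funext a
    simp only [Pi.add_apply, map_add, add_smul, add_vecMul, mulVec_add, dotProduct_add]
    split_ifs <;> ring
  map_smul' t u := by
    funext a
    simp only [Pi.smul_apply, map_smul, mul_smul, smul_vecMul, mulVec_smul, dotProduct_smul,
      Pi.add_apply, smul_eq_mul, RingHom.id_apply]
    split_ifs <;> ring

variable (c r : ℝ) (ev : Fin (p + 1) → ℝ) (A : Matrix (Fin (p + 1)) (Fin (p + 1)) ℝ)

@[simp] theorem frameChange_ix (u : Vp p) : frameChange c r ev A u (ix p) = c * u (ix p) := by
  simp [frameChange, ix]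

@[simp] theorem frameChange_iy (u : Vp p) : frameChange c r ev A u (iy p) = u (iy p) := by
  simp [frameChange, iy]

@[simp] theorem zCoords_frameChange (u : Vp p) :
    zCoords (frameChange c r ev A u) = u (iy p) • ev + zCoords u ᵥ* A := by
  funext i
  have hi := i.2
  simp [frameChange, zCoords, iz, show ¬2 + i.1 = 1 by omega, show 2 + i.1 < p + 3 by omega]

@[simp] theorem frameChange_ixb (u : Vp p) :
    frameChange c r ev A u (ixb p) = c⁻¹ * u (ixb p) + r * u (ix p) := by
  simp [frameChange, ixb]

@[simp] theorem frameChange_iyb (u : Vp p) :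
    frameChange c r ev A u (iyb p) = u (iyb p) - ev ⬝ᵥ (A⁻¹ *ᵥ zbCoords u) := by
  simp [frameChange, iyb]

@[simp] theorem zbCoords_frameChange (u : Vp p) :
    zbCoords (frameChange c r ev A u) = A⁻¹ *ᵥ zbCoords u := by
  funext i
  have hi := i.2
  simp [frameChange, zbCoords, izb, show ¬p + 5 + i.1 = 1 by omega,
    show ¬p + 5 + i.1 < p + 3 by omega, show ¬p + 5 + i.1 = p + 3 by omega,
    show ¬p + 5 + i.1 = p + 4 by omega]

theorem frameChange_injective (hc : c ≠ 0) (hA : IsUnit A.det) :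
    Function.Injective (frameChange c r ev A) := by
  rw [injective_iff_map_eq_zero]
  intro u hu
  have hx : u (ix p) = 0 := by simpa [hc] using congrFun hu (ix p)
  have hy : u (iy p) = 0 := by simpa using congrFun hu (iy p)
  have hz : zCoords u = zCoords 0 := by
    have h := congrArg zCoords hu
    rw [zCoords_frameChange, hy, zero_smul, zero_add, map_zero, ← zero_vecMul A] at h
    rw [map_zero]
    exact vecMul_injective_of_isUnit ((isUnit_iff_isUnit_det A).2 hA) h
  have hzb : zbCoords u = zbCoords 0 := by
    have h := congrArg zbCoords hu
    rw [zbCoords_frameChange, map_zero, ← mulVec_zero A⁻¹] at h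
    rw [map_zero]
    exact mulVec_injective_of_isUnit ((isUnit_iff_isUnit_det _).2 (isUnit_nonsing_inv_det A hA)) h
  have hxb : u (ixb p) = 0 := by simpa [hc, hx] using congrFun hu (ixb p)
  have hyb : u (iyb p) = 0 := by simpa [hzb] using congrFun hu (iyb p)
  exact Vp.ext_coords hx hy hz hxb hyb hzb

theorem gP_frameChange (hc : c ≠ 0) (hA : IsUnit A.det) (f : ℝ → ℝ) (P Q : Vp p)
    (hF : c ^ 2 * FF p f Q - c * r = FF p f P) (u v : Vp p) :
    gP p f Q (frameChange c r ev A u) (frameChange c r ev A v) = gP p f P u v := by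
  have hAuv := vecMul_dotProduct_nonsing_inv_mulVec A hA (zCoords u) (zbCoords v)
  have hAvu := vecMul_dotProduct_nonsing_inv_mulVec A hA (zCoords v) (zbCoords u)
  rw [dotProduct_comm, dotProduct_comm (zCoords v)] at hAvu
  rw [gP_eq, gP_eq, ← hF]
  simp only [frameChange_ix, frameChange_iy, zCoords_frameChange, frameChange_ixb, frameChange_iyb,
    zbCoords_frameChange, add_dotProduct, dotProduct_add, smul_dotProduct, dotProduct_smul,
    smul_eq_mul, hAuv, hAvu, dotProduct_comm (A⁻¹ *ᵥ zbCoords u) ev]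
  field_simp
  ring

end FrameChange

theorem sum_add_mul_prod_erase {ι R : Type*} [Fintype ι] [DecidableEq ι] [CommSemiring R]
    (Y g : ι → R) (d : R) :
    ∑ j, (Y j * d + g j) * ∏ l ∈ univ.erase j, Y l
      = Fintype.card ι * d * ∏ j, Y j + ∑ j, g j * ∏ l ∈ univ.erase j, Y l := by
  simp only [add_mul, sum_add_distrib, mul_right_comm _ d, mul_prod_erase _ _ (mem_univ _),
    sum_const, card_univ, nsmul_eq_mul]
  ring

section Curvature

variable {p : ℕ}

/-- `∇ᵏR` as a function of `α = ∂_y^{k+2} F`, `β_i = ∂_y^{k+1} ∂_{z_i} F`, the components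
`W = ξ ∧ ξ'` on `(x, y)` and `V_i = ξ ∧ ξ'` on `(x, z_i)` of the two curvature pairs, and the
`y`- and `z`-components `Y`, `Z` of the `k` derivative slots. -/
noncomputable def curvModel {k : ℕ} (α : ℝ) (β : Fin (p + 1) → ℝ) (W₁ W₂ : ℝ)
    (V₁ V₂ : Fin (p + 1) → ℝ) (Y : Fin k → ℝ) (Z : Fin k → Fin (p + 1) → ℝ) : ℝ :=
  -(W₁ * W₂) * (α * ∏ j, Y j + ∑ j, β ⬝ᵥ Z j * ∏ l ∈ univ.erase j, Y l)
    - β ⬝ᵥ (W₁ • V₂ + W₂ • V₁) * ∏ j, Y j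

theorem curvModel_transform {k : ℕ} (c e : ℝ) (ev : Fin (p + 1) → ℝ)
    (A : Matrix (Fin (p + 1)) (Fin (p + 1)) ℝ) (αP αQ : ℝ) (βP βQ : Fin (p + 1) → ℝ)
    (hc : c ^ 2 = e) (hβ : e • (A *ᵥ βQ) = βP) (hα : e * (αQ + (k + 2) * (βQ ⬝ᵥ ev)) = αP)
    (W₁ W₂ : ℝ) (V₁ V₂ : Fin (p + 1) → ℝ) (Y : Fin k → ℝ) (Z : Fin k → Fin (p + 1) → ℝ) :
    curvModel αQ βQ (c * W₁) (c * W₂) (c • (W₁ • ev + V₁ ᵥ* A)) (c • (W₂ • ev + V₂ ᵥ* A)) Y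
        (fun j => Y j • ev + Z j ᵥ* A) = curvModel αP βP W₁ W₂ V₁ V₂ Y Z := by
  have hA (w : Fin (p + 1) → ℝ) : e * (βQ ⬝ᵥ (w ᵥ* A)) = βP ⬝ᵥ w := by
    rw [← hβ, dotProduct_comm, ← dotProduct_mulVec, smul_dotProduct, smul_eq_mul, dotProduct_comm]
  have hsum := sum_add_mul_prod_erase Y (fun j => βQ ⬝ᵥ (Z j ᵥ* A)) (βQ ⬝ᵥ ev)
  rw [Fintype.card_fin] at hsum
  have hsum' : e * ∑ j, βQ ⬝ᵥ (Z j ᵥ* A) * ∏ l ∈ univ.erase j, Y l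
      = ∑ j, βP ⬝ᵥ Z j * ∏ l ∈ univ.erase j, Y l := by
    rw [mul_sum]
    exact sum_congr rfl fun j _ => by rw [← hA, mul_assoc]
  have hU := hA (W₁ • V₂ + W₂ • V₁)
  simp only [add_vecMul, smul_vecMul, dotProduct_add, dotProduct_smul, smul_eq_mul] at hU
  simp only [curvModel, dotProduct_add, dotProduct_smul, smul_eq_mul]
  rw [hsum, ← hsum', ← hU, ← hα, ← hc]
  ring

def wedgeZ (ξ ξ' : Vp p) : Fin (p + 1) → ℝ := ξ (ix p) • zCoords ξ' - ξ' (ix p) • zCoords ξ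

noncomputable def curvCoeff (f : ℝ → ℝ) (n : ℕ) (b : ℝ) (z : Fin (p + 1) → ℝ) : ℝ :=
  iteratedDeriv (n + 2) f b + powDerivs p (n + 2) b ⬝ᵥ z

theorem nR_eq_curvModel (f : ℝ → ℝ) (k : ℕ) (P ξ₁ ξ₂ ξ₃ ξ₄ : Vp p) (η : Fin k → Vp p) :
    nR p f k P ξ₁ ξ₂ ξ₃ ξ₄ η = curvModel (curvCoeff f k (P (iy p)) (zCoords P))
      (powDerivs p (k + 1) (P (iy p))) (wdg p (ix p) (iy p) ξ₁ ξ₂) (wdg p (ix p) (iy p) ξ₃ ξ₄)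
      (wedgeZ ξ₁ ξ₂) (wedgeZ ξ₃ ξ₄) (fun j => η j (iy p)) (fun j => zCoords (η j)) := by
  have hZ : ∑ i : Fin (p + 1), iteratedDeriv (k + 1) (fun t => t ^ (i.1 + 1)) (P (iy p)) *
        ∑ j, η j (iz p i) * ∏ l ∈ univ.erase j, η l (iy p)
      = ∑ j, powDerivs p (k + 1) (P (iy p)) ⬝ᵥ zCoords (η j) * ∏ l ∈ univ.erase j, η l (iy p) := by
    simp only [dotProduct, mul_sum, sum_mul, mul_assoc]
    exact sum_comm
  have hV : ∑ i : Fin (p + 1), iteratedDeriv (k + 1) (fun t => t ^ (i.1 + 1)) (P (iy p)) *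
        (wdg p (ix p) (iy p) ξ₁ ξ₂ * wdg p (ix p) (iz p i) ξ₃ ξ₄
          + wdg p (ix p) (iz p i) ξ₁ ξ₂ * wdg p (ix p) (iy p) ξ₃ ξ₄)
      = powDerivs p (k + 1) (P (iy p)) ⬝ᵥ
          (wdg p (ix p) (iy p) ξ₁ ξ₂ • wedgeZ ξ₃ ξ₄ + wdg p (ix p) (iy p) ξ₃ ξ₄ • wedgeZ ξ₁ ξ₂) :=
    sum_congr rfl fun i _ => by
      simp only [wedgeZ, wdg, zCoords, Pi.add_apply, Pi.smul_apply, Pi.sub_apply, smul_eq_mul,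
        LinearMap.funLeft_apply, powDerivs]
      ring
  rw [nR, hZ, hV]
  rfl

variable (c r : ℝ) (ev : Fin (p + 1) → ℝ) (A : Matrix (Fin (p + 1)) (Fin (p + 1)) ℝ)

theorem wdg_frameChange (ξ ξ' : Vp p) :
    wdg p (ix p) (iy p) (frameChange c r ev A ξ) (frameChange c r ev A ξ')
      = c * wdg p (ix p) (iy p) ξ ξ' := by
  simp only [wdg, frameChange_ix, frameChange_iy]
  ring

theorem wedgeZ_frameChange (ξ ξ' : Vp p) :
    wedgeZ (frameChange c r ev A ξ) (frameChange c r ev A ξ')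
      = c • (wdg p (ix p) (iy p) ξ ξ' • ev + wedgeZ ξ ξ' ᵥ* A) := by
  simp only [wedgeZ, wdg, frameChange_ix, zCoords_frameChange, sub_vecMul, smul_vecMul]
  module

theorem nR_frameChange (e : ℝ) (hc : c ^ 2 = e) (f : ℝ → ℝ) (k : ℕ) (P Q : Vp p)
    (hβ : e • (A *ᵥ powDerivs p (k + 1) (Q (iy p))) = powDerivs p (k + 1) (P (iy p)))
    (hα : e * (curvCoeff f k (Q (iy p)) (zCoords Q)
        + (k + 2) * (powDerivs p (k + 1) (Q (iy p)) ⬝ᵥ ev)) = curvCoeff f k (P (iy p)) (zCoords P))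
    (ξ₁ ξ₂ ξ₃ ξ₄ : Vp p) (η : Fin k → Vp p) :
    nR p f k Q (frameChange c r ev A ξ₁) (frameChange c r ev A ξ₂) (frameChange c r ev A ξ₃)
        (frameChange c r ev A ξ₄) (fun l => frameChange c r ev A (η l))
      = nR p f k P ξ₁ ξ₂ ξ₃ ξ₄ η := by
  rw [nR_eq_curvModel, nR_eq_curvModel]
  simp only [wdg_frameChange, wedgeZ_frameChange, frameChange_iy, zCoords_frameChange]
  exact curvModel_transform c e ev A _ _ _ _ hc hβ hα _ _ _ _ _ _

end Curvature

section Exponential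

variable {p : ℕ}

noncomputable def expShift (p : ℕ) (s : ℝ) : Matrix (Fin (p + 1)) (Fin (p + 1)) ℝ :=
  Real.exp (-s) • shiftMatrix p s

theorem iteratedDeriv_exp (n : ℕ) : iteratedDeriv n Real.exp = Real.exp := by
  rw [iteratedDeriv_eq_iterate, Real.iter_deriv_exp]

theorem isUnit_det_expShift (s : ℝ) : IsUnit (expShift p s).det := by
  rw [expShift, det_smul, det_shiftMatrix, mul_one]
  exact (pow_pos (Real.exp_pos _) _).ne'.isUnit

theorem exp_smul_expShift_mulVec_powDerivs (n : ℕ) (b s : ℝ) :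
    Real.exp s • (expShift p s *ᵥ powDerivs p (n + 1) b) = powDerivs p (n + 1) (b + s) := by
  rw [expShift, smul_mulVec, smul_smul, ← Real.exp_add, add_neg_cancel, Real.exp_zero, one_smul,
    shiftMatrix_mulVec_powDerivs]

theorem exp_mul_curvCoeff_add_syntheticQuotient (n : ℕ) (b s : ℝ) (zP zQ : Fin (p + 1) → ℝ) :
    Real.exp s * (curvCoeff Real.exp n b zQ
        + (n + 2) * (powDerivs p (n + 1) b ⬝ᵥ syntheticQuotient b (zP ᵥ* expShift p s - zQ)))
      = curvCoeff Real.exp n (b + s) zP := by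
  have hP : powDerivs p (n + 2) (b + s) ⬝ᵥ zP
      = Real.exp s * (powDerivs p (n + 2) b ⬝ᵥ (zP ᵥ* expShift p s)) := by
    rw [← exp_smul_expShift_mulVec_powDerivs (n + 1), smul_dotProduct, smul_eq_mul,
      dotProduct_comm, dotProduct_mulVec, dotProduct_comm]
  rw [curvCoeff, curvCoeff, iteratedDeriv_exp, hP, ← powDerivs_dotProduct_eq_mul_syntheticQuotient,
    dotProduct_sub, Real.exp_add]
  ring

end Exponential

/-- M¹_{2p+6} = M_{2p+6, e^y} is k-curvature homogeneous for every k: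
for every k and all points P, Q there is a linear isomorphism φ of ℝ^m with
g_Q(φu,φv) = g_P(u,v) and ∇^jR_Q(φξ₁,…,φξ_{4+j}) = ∇^jR_P(ξ₁,…,ξ_{4+j}) for 0 ≤ j ≤ k. -/
theorem exp_metric_k_curvature_homogeneous (p : ℕ) (k : ℕ) (P Q : Vp p) :
    ∃ φ : Vp p ≃ₗ[ℝ] Vp p,
      (∀ u v : Vp p, gP p Real.exp Q (φ u) (φ v) = gP p Real.exp P u v) ∧
      (∀ j : ℕ, j ≤ k → ∀ (ξ₁ ξ₂ ξ₃ ξ₄ : Vp p) (η : Fin j → Vp p),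
        nR p Real.exp j Q (φ ξ₁) (φ ξ₂) (φ ξ₃) (φ ξ₄) (fun l => φ (η l))
          = nR p Real.exp j P ξ₁ ξ₂ ξ₃ ξ₄ η) := by
  set s := P (iy p) - Q (iy p)
  have hs : Q (iy p) + s = P (iy p) := add_sub_cancel _ _
  set c := Real.exp (s / 2)
  have hc : c ≠ 0 := (Real.exp_pos _).ne'
  have hce : c ^ 2 = Real.exp s := by rw [sq, ← Real.exp_add, add_halves]
  set A := expShift p s
  set ev := syntheticQuotient (Q (iy p)) (zCoords P ᵥ* A - zCoords Q)
  set φ := frameChange c (c * FF p Real.exp Q - c⁻¹ * FF p Real.exp P) ev A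
  refine ⟨LinearEquiv.ofInjectiveEndo φ (frameChange_injective _ _ _ _ hc (isUnit_det_expShift s)),
    fun u v => gP_frameChange _ _ _ _ hc (isUnit_det_expShift s) _ _ _ ?_ u v,
    fun j _ => nR_frameChange _ _ _ _ _ hce _ _ _ _ ?_ ?_⟩
  · field_simp
    ring
  · rw [exp_smul_expShift_mulVec_powDerivs, hs]
  · rw [exp_mul_curvCoeff_add_syntheticQuotient, hs]
end

section
/- Let f₁(y) = e^y and f₂(y) = e^y + e^{2y}, and denote by g^{(1)}_P, ∇^kR^{(1)}_P and g^{(2)}_P, ∇^kR^{(2)}_P the tensors associated to f₁ and f₂ respectively. Then for every pair of points P, Q ∈ ℝ^m there exists a linear isomorphism φ : ℝ^m → ℝ^m such that g^{(1)}_Q(φu, φv) = g^{(2)}_P(u, v) for all u, v ∈ ℝ^m and ∇^kR^{(1)}_Q(φξ₁, …, φξ_{4+k}) = ∇^kR^{(2)}_P(ξ₁, …, ξ_{4+k}) for all 0 ≤ k ≤ p+2 and all arguments. That is, M²_{2p+6} = M_{2p+6, e^y+e^{2y}} is (p+2)-modeled on M¹_{2p+6} = M_{2p+6, e^y}. -/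
/-!
The isomorphism is a shear `x ↦ s x`, `y ↦ t y`, `z ↦ M z + y μ`, completed on the barred
coordinates so that it carries `g⁽²⁾_P` to `g⁽¹⁾_Q`; it is injective because `g⁽²⁾_P` is
nondegenerate. The tensor `∇ᵏR_P` depends on `f` and `P` only through the scalar
`A_k = f⁽ᵏ⁺²⁾(y) + Σᵢ (yⁱ⁺¹)⁽ᵏ⁺²⁾ zᵢ` and the vector `B_k = ((yⁱ⁺¹)⁽ᵏ⁺¹⁾)ᵢ`, and a shear pulls it
back to a tensor of the same shape with `A_k ↦ s²tᵏ⁺² A_k + (k+2) s²tᵏ⁺¹ ⟨B_k, μ⟩` and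
`B_k ↦ s²tᵏ⁺¹ B_k M`. For `k ≤ p` the vectors `B_k(Q)` are the rows of an invertible triangular
matrix, so `M` and `μ` can be solved for. For `k = p+1, p+2` the vector `B_k` vanishes and
`A_k = f⁽ᵏ⁺²⁾(y)`, so what remains is `f₂⁽ᵖ⁺³⁾(P_y) = s²tᵖ⁺³ f₁⁽ᵖ⁺³⁾(Q_y)` and
`f₂⁽ᵖ⁺⁴⁾(P_y) = s²tᵖ⁺⁴ f₁⁽ᵖ⁺⁴⁾(Q_y)`, which `s` and `t` can satisfy since all four derivatives are
positive.
-/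

namespace ModelSpace

open Finset Matrix

lemma exists_scaling (n : ℕ) {a b a' b' : ℝ} (ha : 0 < a) (hb : 0 < b) (ha' : 0 < a')
    (hb' : 0 < b') : ∃ s t : ℝ, s ≠ 0 ∧ t ≠ 0 ∧ a = s ^ 2 * t ^ n * b ∧
      a' = s ^ 2 * t ^ (n + 1) * b' := by
  obtain ⟨t, ht, htp⟩ : ∃ t, t = a' * b / (a * b') ∧ 0 < t := ⟨_, rfl, by positivity⟩
  have hs : 0 < a / (t ^ n * b) := by positivity
  refine ⟨√(a / (t ^ n * b)), t, (Real.sqrt_pos.2 hs).ne', htp.ne', ?_, ?_⟩ <;>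
    rw [Real.sq_sqrt hs.le]
  · field_simp
  · rw [pow_succ, ht]
    field_simp

lemma mul_prod_erase_const_mul {R : Type*} [CommMonoid R] {k : ℕ} (j : Fin k) (t : R)
    (b : Fin k → R) :
    t * ∏ l ∈ univ.erase j, t * b l = t ^ k * ∏ l ∈ univ.erase j, b l := by
  rw [prod_mul_distrib, prod_const, card_erase_of_mem (mem_univ j), card_univ,
    Fintype.card_fin, ← mul_assoc, ← pow_succ', Nat.sub_add_cancel (Fin.pos j)]

lemma mulVec_add_smul_dotProduct_vecMul_inv {n : Type*} [Fintype n] [DecidableEq n]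
    {R : Type*} [CommRing R] {M : Matrix n n R} (hM : IsUnit M.det) (a b μ : n → R) (y : R) :
    (M *ᵥ a + y • μ) ⬝ᵥ (b ᵥ* M⁻¹) = a ⬝ᵥ b + y * ((M⁻¹ *ᵥ μ) ⬝ᵥ b) := by
  rw [add_dotProduct, smul_dotProduct, dotProduct_comm (M *ᵥ a), dotProduct_mulVec,
    vecMul_vecMul, nonsing_inv_mul _ hM, vecMul_one, dotProduct_comm μ, ← dotProduct_mulVec,
    dotProduct_comm b a, dotProduct_comm b, smul_eq_mul]

inductive Coord (p : ℕ)
  | x | y | z (i : Fin (p + 1)) | xb | yb | zb (i : Fin (p + 1))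
  deriving DecidableEq

variable {p : ℕ}

def Coord.index : Coord p → Fin (2 * p + 6)
  | .x => ix p
  | .y => iy p
  | .z i => iz p i
  | .xb => ixb p
  | .yb => iyb p
  | .zb i => izb p i

def Coord.ofIndex (j : Fin (2 * p + 6)) : Coord p :=
  if j.1 = 0 then .x
  else if j.1 = 1 then .y
  else if h : j.1 < p + 3 then .z ⟨j.1 - 2, by omega⟩
  else if j.1 = p + 3 then .xb
  else if j.1 = p + 4 then .yb
  else .zb ⟨j.1 - (p + 5), by omega⟩

variable (p) in
def coordEquiv : Fin (2 * p + 6) ≃ Coord p where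
  toFun := Coord.ofIndex
  invFun := Coord.index
  left_inv j := by
    unfold Coord.ofIndex
    split_ifs <;> ext <;> simp [Coord.index, ix, iy, iz, ixb, iyb, izb] <;> omega
  right_inv c := by
    cases c <;> simp [Coord.ofIndex, Coord.index, ix, iy, iz, ixb, iyb, izb] <;>
      split_ifs <;> first | rfl | omega

lemma coordEquiv_symm_apply (c : Coord p) : (coordEquiv p).symm c = c.index := rfl

@[simp] lemma coordEquiv_ix : coordEquiv p (ix p) = .x := (coordEquiv p).apply_symm_apply .x
@[simp] lemma coordEquiv_iy : coordEquiv p (iy p) = .y := (coordEquiv p).apply_symm_apply .y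
@[simp] lemma coordEquiv_iz (i : Fin (p + 1)) : coordEquiv p (iz p i) = .z i :=
  (coordEquiv p).apply_symm_apply (.z i)
@[simp] lemma coordEquiv_ixb : coordEquiv p (ixb p) = .xb := (coordEquiv p).apply_symm_apply .xb
@[simp] lemma coordEquiv_iyb : coordEquiv p (iyb p) = .yb := (coordEquiv p).apply_symm_apply .yb
@[simp] lemma coordEquiv_izb (i : Fin (p + 1)) : coordEquiv p (izb p i) = .zb i :=
  (coordEquiv p).apply_symm_apply (.zb i)

def zPart (u : Vp p) : Fin (p + 1) → ℝ := fun i => u (iz p i)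

def zbPart (u : Vp p) : Fin (p + 1) → ℝ := fun i => u (izb p i)

lemma gP_eq (f : ℝ → ℝ) (P u v : Vp p) :
    gP p f P u v = u (ix p) * v (ixb p) + u (ixb p) * v (ix p) + u (iy p) * v (iyb p)
      + u (iyb p) * v (iy p) + (zPart u ⬝ᵥ zbPart v + zbPart u ⬝ᵥ zPart v)
      - 2 * FF p f P * (u (ix p) * v (ix p)) := by
  simp only [gP, zPart, zbPart, dotProduct, sum_add_distrib]

lemma eq_zero_of_forall_gP_eq_zero {f : ℝ → ℝ} {P u : Vp p} (h : ∀ v, gP p f P u v = 0) :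
    u = 0 := by
  have hu (c : Coord p) := h (Pi.single ((coordEquiv p).symm c) 1)
  simp only [gP_eq, zPart, zbPart, dotProduct, Pi.single_apply, Equiv.eq_symm_apply,
    coordEquiv_ix, coordEquiv_iy, coordEquiv_iz, coordEquiv_ixb, coordEquiv_iyb,
    coordEquiv_izb] at hu
  have hx : u (ix p) = 0 := by simpa using hu .xb
  funext j
  obtain ⟨c, rfl⟩ := (coordEquiv p).symm.surjective j
  cases c with
  | x => exact hx
  | y => simpa [coordEquiv_symm_apply, Coord.index] using hu .yb
  | z i => simpa [coordEquiv_symm_apply, Coord.index] using hu (.zb i)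
  | xb => simpa [coordEquiv_symm_apply, Coord.index, hx] using hu .x
  | yb => simpa [coordEquiv_symm_apply, Coord.index] using hu .y
  | zb i => simpa [coordEquiv_symm_apply, Coord.index] using hu (.z i)

lemma injective_of_gP_map {f f' : ℝ → ℝ} {P Q : Vp p} {φ : Vp p →ₗ[ℝ] Vp p}
    (h : ∀ u v, gP p f Q (φ u) (φ v) = gP p f' P u v) : Function.Injective φ := by
  rw [← LinearMap.ker_eq_bot, LinearMap.ker_eq_bot']
  refine fun u hu => eq_zero_of_forall_gP_eq_zero (f := f') (P := P) fun v => ?_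
  rw [← h, hu]
  simp [gP]

section Shear

variable (s t c : ℝ) (M : Matrix (Fin (p + 1)) (Fin (p + 1)) ℝ) (μ : Fin (p + 1) → ℝ)

-- The barred coordinates transform contragrediently to `(y, z)`, which keeps the pairings
-- `x x̄`, `y ȳ`, `z z̄` of `g`; the correction `c x` in `x̄` absorbs the change of `F`.
noncomputable def shearCoord : Coord p → Vp p →ₗ[ℝ] ℝ
  | .x => s • LinearMap.proj (ix p)
  | .y => t • LinearMap.proj (iy p)
  | .z i => ∑ l, M i l • LinearMap.proj (iz p l) + μ i • LinearMap.proj (iy p)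
  | .xb => s⁻¹ • LinearMap.proj (ixb p) + c • LinearMap.proj (ix p)
  | .yb => t⁻¹ • (LinearMap.proj (iyb p) - ∑ l, (M⁻¹ *ᵥ μ) l • LinearMap.proj (izb p l))
  | .zb i => ∑ l, M⁻¹ l i • LinearMap.proj (izb p l)

noncomputable def shear : Vp p →ₗ[ℝ] Vp p :=
  LinearMap.pi fun j => shearCoord s t c M μ (coordEquiv p j)

variable (u : Vp p)

lemma shear_apply_ix : shear s t c M μ u (ix p) = s * u (ix p) := by
  simp [shear, shearCoord]

lemma shear_apply_iy : shear s t c M μ u (iy p) = t * u (iy p) := by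
  simp [shear, shearCoord]

lemma zPart_shear : zPart (shear s t c M μ u) = M *ᵥ zPart u + u (iy p) • μ := by
  ext i
  simp [shear, shearCoord, zPart, mulVec, dotProduct, mul_comm]

lemma shear_apply_ixb : shear s t c M μ u (ixb p) = s⁻¹ * u (ixb p) + c * u (ix p) := by
  simp [shear, shearCoord]

lemma shear_apply_iyb :
    shear s t c M μ u (iyb p) = t⁻¹ * (u (iyb p) - (M⁻¹ *ᵥ μ) ⬝ᵥ zbPart u) := by
  simp [shear, shearCoord, zbPart, dotProduct]

lemma zbPart_shear : zbPart (shear s t c M μ u) = zbPart u ᵥ* M⁻¹ := by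
  ext i
  simp [shear, shearCoord, zbPart, vecMul, dotProduct, mul_comm]

end Shear

variable (p) in
noncomputable def coeffB (k : ℕ) (R : Vp p) : Fin (p + 1) → ℝ :=
  fun i => iteratedDeriv (k + 1) (fun t => t ^ (i.1 + 1)) (R (iy p))

variable (p) in
noncomputable def coeffA (f : ℝ → ℝ) (k : ℕ) (R : Vp p) : ℝ :=
  iteratedDeriv (k + 2) f (R (iy p)) + coeffB p (k + 1) R ⬝ᵥ zPart R

def wdgXZ (u v : Vp p) : Fin (p + 1) → ℝ := fun i => wdg p (ix p) (iz p i) u v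

def yProd {k : ℕ} (η : Fin k → Vp p) : ℝ := ∏ j, η j (iy p)

def zDeriv {k : ℕ} (η : Fin k → Vp p) : Fin (p + 1) → ℝ :=
  fun i => ∑ j, η j (iz p i) * ∏ l ∈ univ.erase j, η l (iy p)

def curvForm (k : ℕ) (A : ℝ) (B : Fin (p + 1) → ℝ) (ξ₁ ξ₂ ξ₃ ξ₄ : Vp p)
    (η : Fin k → Vp p) : ℝ :=
  -(wdg p (ix p) (iy p) ξ₁ ξ₂ * wdg p (ix p) (iy p) ξ₃ ξ₄) * (A * yProd η + B ⬝ᵥ zDeriv η)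
    - B ⬝ᵥ (wdg p (ix p) (iy p) ξ₁ ξ₂ • wdgXZ ξ₃ ξ₄ + wdg p (ix p) (iy p) ξ₃ ξ₄ • wdgXZ ξ₁ ξ₂)
      * yProd η

lemma nR_eq_curvForm (f : ℝ → ℝ) (k : ℕ) (P ξ₁ ξ₂ ξ₃ ξ₄ : Vp p) (η : Fin k → Vp p) :
    nR p f k P ξ₁ ξ₂ ξ₃ ξ₄ η = curvForm k (coeffA p f k P) (coeffB p k P) ξ₁ ξ₂ ξ₃ ξ₄ η := by
  simp only [nR, curvForm, coeffA, coeffB, yProd, zDeriv, wdgXZ, zPart, dotProduct, Pi.add_apply,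
    Pi.smul_apply, smul_eq_mul]
  congr 3
  funext i
  ring

lemma zDeriv_eq_sum {k : ℕ} (η : Fin k → Vp p) :
    zDeriv η = ∑ j, (∏ l ∈ univ.erase j, η l (iy p)) • zPart (η j) := by
  ext i
  simp [zDeriv, zPart, Finset.sum_apply, mul_comm]

lemma wdgXZ_eq (u v : Vp p) : wdgXZ u v = u (ix p) • zPart v - v (ix p) • zPart u := by
  ext i
  simp only [wdgXZ, wdg, zPart, Pi.sub_apply, Pi.smul_apply, smul_eq_mul]
  ring

section ShearAction

variable {s t c : ℝ} {M : Matrix (Fin (p + 1)) (Fin (p + 1)) ℝ} {μ : Fin (p + 1) → ℝ}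

lemma gP_shear {f f' : ℝ → ℝ} {P Q : Vp p} (hs : s ≠ 0) (ht : t ≠ 0) (hM : IsUnit M.det)
    (hc : s * c = s ^ 2 * FF p f Q - FF p f' P) (u v : Vp p) :
    gP p f Q (shear s t c M μ u) (shear s t c M μ v) = gP p f' P u v := by
  rw [gP_eq, gP_eq, shear_apply_ix, shear_apply_ix, shear_apply_iy, shear_apply_iy,
    shear_apply_ixb, shear_apply_ixb, shear_apply_iyb, shear_apply_iyb, zPart_shear,
    zPart_shear, zbPart_shear, zbPart_shear, dotProduct_comm (zbPart u ᵥ* M⁻¹),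
    mulVec_add_smul_dotProduct_vecMul_inv hM, mulVec_add_smul_dotProduct_vecMul_inv hM,
    dotProduct_comm (zPart v)]
  field_simp
  linear_combination 2 * u (ix p) * v (ix p) * hc

lemma wdg_shear (u v : Vp p) :
    wdg p (ix p) (iy p) (shear s t c M μ u) (shear s t c M μ v)
      = s * t * wdg p (ix p) (iy p) u v := by
  simp only [wdg, shear_apply_ix, shear_apply_iy]
  ring

lemma wdgXZ_shear (u v : Vp p) :
    wdgXZ (shear s t c M μ u) (shear s t c M μ v)
      = s • (M *ᵥ wdgXZ u v + wdg p (ix p) (iy p) u v • μ) := by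
  simp only [wdgXZ_eq, zPart_shear, shear_apply_ix, wdg, mulVec_sub, mulVec_smul]
  module

lemma yProd_shear {k : ℕ} (η : Fin k → Vp p) :
    yProd (fun l => shear s t c M μ (η l)) = t ^ k * yProd η := by
  simp [yProd, shear_apply_iy, prod_mul_distrib]

-- Multiplied by `t` so that no `t ^ (k - 1)`, truncated at `k = 0`, appears.
lemma zDeriv_shear {k : ℕ} (η : Fin k → Vp p) :
    t • zDeriv (fun l => shear s t c M μ (η l))
      = t ^ k • (M *ᵥ zDeriv η + ((k : ℝ) * yProd η) • μ) := by
  simp only [zDeriv_eq_sum, zPart_shear, shear_apply_iy, smul_sum, smul_smul,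
    mul_prod_erase_const_mul]
  simp only [smul_add, sum_add_distrib, smul_smul, mulVec_sum, mulVec_smul, smul_sum,
    ← sum_smul, mul_assoc, prod_erase_mul univ _ (mem_univ _)]
  simp [yProd, mul_left_comm]

lemma curvForm_shear (k : ℕ) (A : ℝ) (B : Fin (p + 1) → ℝ) (ξ₁ ξ₂ ξ₃ ξ₄ : Vp p)
    (η : Fin k → Vp p) :
    curvForm k A B (shear s t c M μ ξ₁) (shear s t c M μ ξ₂) (shear s t c M μ ξ₃)
        (shear s t c M μ ξ₄) (fun l => shear s t c M μ (η l))
      = curvForm k (s ^ 2 * t ^ (k + 2) * A + (k + 2) * s ^ 2 * t ^ (k + 1) * (B ⬝ᵥ μ))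
          ((s ^ 2 * t ^ (k + 1)) • (B ᵥ* M)) ξ₁ ξ₂ ξ₃ ξ₄ η := by
  have hd := congrArg (B ⬝ᵥ ·) (zDeriv_shear (s := s) (t := t) (c := c) (M := M) (μ := μ) η)
  simp only [dotProduct_smul, dotProduct_add, dotProduct_mulVec, smul_eq_mul] at hd
  simp only [curvForm, wdg_shear, wdgXZ_shear, yProd_shear, dotProduct_smul, dotProduct_add,
    smul_dotProduct, dotProduct_mulVec, smul_eq_mul]
  linear_combination (-(s ^ 2) * t * wdg p (ix p) (iy p) ξ₁ ξ₂ * wdg p (ix p) (iy p) ξ₃ ξ₄) * hd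

end ShearAction

lemma coeffB_apply (k : ℕ) (R : Vp p) (i : Fin (p + 1)) :
    coeffB p k R i = (i.1 + 1).descFactorial (k + 1) * R (iy p) ^ (i.1 - k) := by
  simp [coeffB]

lemma coeffB_eq_zero {k : ℕ} (hk : p < k) (R : Vp p) : coeffB p k R = 0 := by
  ext i
  simp only [coeffB_apply, Pi.zero_apply, Nat.descFactorial_of_lt (show i.1 + 1 < k + 1 by omega),
    Nat.cast_zero, zero_mul]

lemma coeffA_of_lt {k : ℕ} (hk : p < k) (f : ℝ → ℝ) (R : Vp p) :
    coeffA p f k R = iteratedDeriv (k + 2) f (R (iy p)) := by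
  rw [coeffA, coeffB_eq_zero (by omega), zero_dotProduct, add_zero]

variable (p) in
noncomputable def coeffMatrix (R : Vp p) : Matrix (Fin (p + 1)) (Fin (p + 1)) ℝ :=
  of fun k => coeffB p k R

lemma isUnit_det_coeffMatrix (R : Vp p) : IsUnit (coeffMatrix p R).det := by
  have htri : (coeffMatrix p R).IsUpperTriangular := fun k i hik => by
    simp only [coeffMatrix, of_apply, coeffB_apply,
      Nat.descFactorial_of_lt (show i.1 + 1 < k.1 + 1 by simpa using hik), Nat.cast_zero, zero_mul]
  rw [det_of_isUpperTriangular htri, isUnit_iff_ne_zero, prod_ne_zero_iff]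
  intro k _
  simp [coeffMatrix, coeffB_apply]

variable (p) in
noncomputable def shearMatrix (s t : ℝ) (P Q : Vp p) : Matrix (Fin (p + 1)) (Fin (p + 1)) ℝ :=
  (coeffMatrix p Q)⁻¹ * (diagonal (fun k => (s ^ 2 * t ^ (k.1 + 1))⁻¹) * coeffMatrix p P)

lemma isUnit_det_shearMatrix {s t : ℝ} (hs : s ≠ 0) (ht : t ≠ 0) (P Q : Vp p) :
    IsUnit (shearMatrix p s t P Q).det := by
  rw [shearMatrix, det_mul, det_mul, det_diagonal]
  refine ((isUnit_nonsing_inv_det _ (isUnit_det_coeffMatrix Q)).mul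
    (IsUnit.mul ?_ (isUnit_det_coeffMatrix P)))
  rw [isUnit_iff_ne_zero, prod_ne_zero_iff]
  intro k _
  positivity

lemma coeffB_eq_smul_vecMul_shearMatrix {s t : ℝ} (hs : s ≠ 0) (ht : t ≠ 0) (P Q : Vp p)
    (k : ℕ) : coeffB p k P = (s ^ 2 * t ^ (k + 1)) • (coeffB p k Q ᵥ* shearMatrix p s t P Q) := by
  rcases le_or_gt k p with hk | hk
  · have hrow : coeffB p k Q ᵥ* shearMatrix p s t P Q
        = (s ^ 2 * t ^ (k + 1))⁻¹ • coeffB p k P := by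
      rw [show coeffB p k Q ᵥ* shearMatrix p s t P Q
          = (coeffMatrix p Q * shearMatrix p s t P Q) ⟨k, by omega⟩ from rfl, shearMatrix,
        mul_nonsing_inv_cancel_left _ _ (isUnit_det_coeffMatrix Q)]
      ext i
      simp [diagonal_mul, coeffMatrix]
    rw [hrow, smul_smul, mul_inv_cancel₀ (by positivity), one_smul]
  · simp [coeffB_eq_zero hk]

variable (p) in
noncomputable def shearVector (f₁ f₂ : ℝ → ℝ) (s t : ℝ) (P Q : Vp p) : Fin (p + 1) → ℝ :=
  (coeffMatrix p Q)⁻¹ *ᵥ fun k => (coeffA p f₂ k P - s ^ 2 * t ^ (k.1 + 2) * coeffA p f₁ k Q)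
    / ((k.1 + 2) * s ^ 2 * t ^ (k.1 + 1))

lemma coeffA_eq_of_le {f₁ f₂ : ℝ → ℝ} {s t : ℝ} (hs : s ≠ 0) (ht : t ≠ 0) (P Q : Vp p) {k : ℕ}
    (hk : k ≤ p) :
    coeffA p f₂ k P = s ^ 2 * t ^ (k + 2) * coeffA p f₁ k Q
      + (k + 2) * s ^ 2 * t ^ (k + 1) * (coeffB p k Q ⬝ᵥ shearVector p f₁ f₂ s t P Q) := by
  have hrow : coeffB p k Q ⬝ᵥ shearVector p f₁ f₂ s t P Q
      = (coeffA p f₂ k P - s ^ 2 * t ^ (k + 2) * coeffA p f₁ k Q)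
        / ((k + 2) * s ^ 2 * t ^ (k + 1)) := by
    rw [show coeffB p k Q ⬝ᵥ shearVector p f₁ f₂ s t P Q
        = (coeffMatrix p Q *ᵥ shearVector p f₁ f₂ s t P Q) ⟨k, by omega⟩ from rfl, shearVector,
      mulVec_mulVec, mul_nonsing_inv _ (isUnit_det_coeffMatrix Q), one_mulVec]
  rw [hrow]
  field_simp
  ring

theorem exists_linearEquiv_gP_nR_of_iteratedDeriv {f₁ f₂ : ℝ → ℝ} {P Q : Vp p} {s t : ℝ}
    (hs : s ≠ 0) (ht : t ≠ 0)
    (h₃ : iteratedDeriv (p + 3) f₂ (P (iy p))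
      = s ^ 2 * t ^ (p + 3) * iteratedDeriv (p + 3) f₁ (Q (iy p)))
    (h₄ : iteratedDeriv (p + 4) f₂ (P (iy p))
      = s ^ 2 * t ^ (p + 4) * iteratedDeriv (p + 4) f₁ (Q (iy p))) :
    ∃ φ : Vp p ≃ₗ[ℝ] Vp p, (∀ u v, gP p f₁ Q (φ u) (φ v) = gP p f₂ P u v) ∧
      ∀ k ≤ p + 2, ∀ (ξ₁ ξ₂ ξ₃ ξ₄ : Vp p) (η : Fin k → Vp p),
        nR p f₁ k Q (φ ξ₁) (φ ξ₂) (φ ξ₃) (φ ξ₄) (fun l => φ (η l)) = nR p f₂ k P ξ₁ ξ₂ ξ₃ ξ₄ η := by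
  set φ := shear s t ((s ^ 2 * FF p f₁ Q - FF p f₂ P) / s) (shearMatrix p s t P Q)
    (shearVector p f₁ f₂ s t P Q)
  have hg : ∀ u v, gP p f₁ Q (φ u) (φ v) = gP p f₂ P u v :=
    gP_shear hs ht (isUnit_det_shearMatrix hs ht P Q) (by field_simp)
  have hA : ∀ k ≤ p + 2, coeffA p f₂ k P = s ^ 2 * t ^ (k + 2) * coeffA p f₁ k Q
      + (k + 2) * s ^ 2 * t ^ (k + 1) * (coeffB p k Q ⬝ᵥ shearVector p f₁ f₂ s t P Q) := by
    intro k hk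
    rcases le_or_gt k p with hkp | hkp
    · exact coeffA_eq_of_le hs ht P Q hkp
    rw [coeffB_eq_zero hkp, zero_dotProduct, mul_zero, add_zero, coeffA_of_lt hkp,
      coeffA_of_lt hkp]
    obtain rfl | rfl : k = p + 1 ∨ k = p + 2 := by omega
    exacts [h₃, h₄]
  refine ⟨.ofInjectiveEndo φ (injective_of_gP_map hg), hg, fun k hk ξ₁ ξ₂ ξ₃ ξ₄ η => ?_⟩
  simp only [LinearEquiv.coe_ofInjectiveEndo, nR_eq_curvForm, φ, curvForm_shear, ← hA k hk,
    ← coeffB_eq_smul_vecMul_shearMatrix hs ht]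

lemma iteratedDeriv_exp_add_exp_two_mul (n : ℕ) (y : ℝ) :
    iteratedDeriv n (fun y => Real.exp y + Real.exp (2 * y)) y
      = Real.exp y + 2 ^ n * Real.exp (2 * y) := by
  rw [iteratedDeriv_fun_add (by fun_prop) (by fun_prop), iteratedDeriv_exp_const_mul,
    iteratedDeriv_eq_iterate, Real.iter_deriv_exp]

lemma iteratedDeriv_exp_pos (n : ℕ) (y : ℝ) : 0 < iteratedDeriv n Real.exp y := by
  rw [iteratedDeriv_eq_iterate, Real.iter_deriv_exp]
  exact Real.exp_pos y

end ModelSpace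

/-- M²_{2p+6} = M_{2p+6, e^y+e^{2y}} is (p+2)-modeled on
M¹_{2p+6} = M_{2p+6, e^y}: for all points P, Q there is a linear isomorphism φ of ℝ^m
with g^{(1)}_Q(φu,φv) = g^{(2)}_P(u,v) and
∇^kR^{(1)}_Q(φξ₁,…,φξ_{4+k}) = ∇^kR^{(2)}_P(ξ₁,…,ξ_{4+k}) for all 0 ≤ k ≤ p+2,
where the superscripts (1), (2) refer to f₁(y) = e^y and f₂(y) = e^y + e^{2y}. -/
theorem M2_is_p_plus_two_modeled_on_M1 (p : ℕ) (P Q : Vp p) :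
    ∃ φ : Vp p ≃ₗ[ℝ] Vp p,
      (∀ u v : Vp p, gP p Real.exp Q (φ u) (φ v)
        = gP p (fun y => Real.exp y + Real.exp (2*y)) P u v) ∧
      (∀ k : ℕ, k ≤ p+2 → ∀ (ξ₁ ξ₂ ξ₃ ξ₄ : Vp p) (η : Fin k → Vp p),
        nR p Real.exp k Q (φ ξ₁) (φ ξ₂) (φ ξ₃) (φ ξ₄) (fun l => φ (η l))
          = nR p (fun y => Real.exp y + Real.exp (2*y)) k P ξ₁ ξ₂ ξ₃ ξ₄ η) := by
  have hpos (n : ℕ) : 0 < iteratedDeriv n (fun y => Real.exp y + Real.exp (2 * y)) (P (iy p)) := by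
    rw [ModelSpace.iteratedDeriv_exp_add_exp_two_mul]
    positivity
  obtain ⟨s, t, hs, ht, h₃, h₄⟩ := ModelSpace.exists_scaling (p + 3) (hpos (p + 3))
    (ModelSpace.iteratedDeriv_exp_pos _ _) (hpos (p + 4)) (ModelSpace.iteratedDeriv_exp_pos _ _)
  exact ModelSpace.exists_linearEquiv_gP_nR_of_iteratedDeriv hs ht h₃ h₄
end

section
/- Let f(y) = e^y + e^{2y}. Then the function α(y) = f^{(p+3)}(y) f^{(p+5)}(y) / (f^{(p+4)}(y))² is not constant on ℝ. Consequently there exist points P, Q ∈ ℝ^m for which no linear isomorphism φ : ℝ^m → ℝ^m satisfies φ(∇^k𝓡_P(ξ₁, ξ₂; η₁, …, η_k)ξ₃) = ∇^k𝓡_Q(φξ₁, φξ₂; φη₁, …, φη_k)(φξ₃) for all 0 ≤ k ≤ p+3 and all arguments; that is, M²_{2p+6} = M_{2p+6, e^y+e^{2y}} is not affine (p+3)-curvature homogeneous. -/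
/-
For k ≥ p + 1 every derivative `(d/dy)^{k+1} y^{i+1}` vanishes, so
`∇^k𝓡(ξ₁, ξ₂; η) ξ₃ = -f^{(k+2)}(y) (ξ₁ ∧ ξ₂)_{xy} (∏ η_j^y) ξ₃^♯`, where `ξ₃^♯` is the `g`-dual
of `(ξ₃ ∧ ·)_{xy}`. If `φ` intertwines these operators at `P` and `Q` for `k = p+1, p+2, p+3`,
evaluating at `(∂x, ∂y; ∂y, …, ∂y) ∂x` shows that `f^{(k+2)}(y_P)` and `c f^{(k+2)}(y_Q) t^k`
are proportional with a factor independent of `k`, where `c`, `t` depend only on `φ`. All of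
these constants cancel in `α = f^{(p+3)} f^{(p+5)} / (f^{(p+4)})²`, so `α(y_P) = α(y_Q)`; but
for `f = e^y + e^{2y}`, `α` takes both values `10/9` and `9/8`.
-/

open Real

lemma iteratedDeriv_pow_of_lt {𝕜 : Type*} [NontriviallyNormedField 𝕜] {m n : ℕ} (h : m < n)
    (x : 𝕜) : iteratedDeriv n (fun t => t ^ m) x = 0 := by
  simp [Nat.descFactorial_eq_zero_iff_lt.mpr h]

lemma ix_ne_iy (p : ℕ) : ix p ≠ iy p := by
  simp [ix, iy]

lemma wdg_single_ix_single_iy (p : ℕ) :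
    wdg p (ix p) (iy p) (Pi.single (ix p) 1) (Pi.single (iy p) 1) = 1 := by
  simp [wdg, ix_ne_iy, (ix_ne_iy p).symm]

lemma nR_of_le {p k : ℕ} (hk : p + 1 ≤ k) (f : ℝ → ℝ) (P ξ₁ ξ₂ ξ₃ ξ₄ : Vp p)
    (η : Fin k → Vp p) :
    nR p f k P ξ₁ ξ₂ ξ₃ ξ₄ η = -(wdg p (ix p) (iy p) ξ₁ ξ₂ * wdg p (ix p) (iy p) ξ₃ ξ₄) *
      (iteratedDeriv (k + 2) f (P (iy p)) * ∏ j, η j (iy p)) := by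
  have h₁ : ∀ i : Fin (p + 1), iteratedDeriv (k + 1) (fun t : ℝ => t ^ (i.1 + 1)) (P (iy p)) = 0 :=
    fun i => iteratedDeriv_pow_of_lt (by omega) _
  have h₂ : ∀ i : Fin (p + 1), iteratedDeriv (k + 2) (fun t : ℝ => t ^ (i.1 + 1)) (P (iy p)) = 0 :=
    fun i => iteratedDeriv_pow_of_lt (by omega) _
  simp only [nR, h₁, h₂, zero_mul, Finset.sum_const_zero, add_zero, sub_zero]

/-- The `g_P`-dual of the covector `(ξ ∧ ·)_{xy}`; it does not depend on `P`. -/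
def dualWedgeXY (p : ℕ) (ξ : Vp p) : Vp p :=
  Pi.single (iyb p) (ξ (ix p)) - Pi.single (ixb p) (ξ (iy p))

lemma gP_dualWedgeXY (p : ℕ) (f : ℝ → ℝ) (P ξ₃ ξ₄ : Vp p) :
    gP p f P (dualWedgeXY p ξ₃) ξ₄ = wdg p (ix p) (iy p) ξ₃ ξ₄ := by
  have hz : ∀ i, dualWedgeXY p ξ₃ (iz p i) = 0 ∧ dualWedgeXY p ξ₃ (izb p i) = 0 := fun i => by
    have := i.2
    constructor <;> simp [dualWedgeXY, Pi.single_apply, iz, izb, ixb, iyb, Fin.ext_iff] <;>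
      split_ifs <;> first | omega | simp
  rw [gP, Finset.sum_eq_zero fun i _ => by rw [(hz i).1, (hz i).2]; ring]
  simp [wdg, dualWedgeXY, ix, iy, ixb, iyb, Fin.ext_iff]
  ring

lemma dualWedgeXY_single_ix_ne_zero (p : ℕ) : dualWedgeXY p (Pi.single (ix p) 1) ≠ 0 := by
  intro h
  simpa [dualWedgeXY, ixb, iyb, Fin.ext_iff] using congrFun h (iyb p)

lemma gP_smul_left (p : ℕ) (f : ℝ → ℝ) (P : Vp p) (c : ℝ) (u v : Vp p) :
    gP p f P (c • u) v = c * gP p f P u v := by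
  simp only [gP, Pi.smul_apply, smul_eq_mul, mul_assoc, ← mul_add, ← Finset.mul_sum]
  ring

/-- `∇^k𝓡_P` when `k ≥ p + 1`. -/
noncomputable def highCurvatureOp (p : ℕ) (f : ℝ → ℝ) (k : ℕ) (P : Vp p) :
    Vp p → Vp p → (Fin k → Vp p) → Vp p → Vp p :=
  fun ξ₁ ξ₂ η ξ₃ =>
    (-wdg p (ix p) (iy p) ξ₁ ξ₂ * iteratedDeriv (k + 2) f (P (iy p)) * ∏ j, η j (iy p)) •
      dualWedgeXY p ξ₃

lemma gP_highCurvatureOp {p k : ℕ} (hk : p + 1 ≤ k) (f : ℝ → ℝ) (P ξ₁ ξ₂ : Vp p)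
    (η : Fin k → Vp p) (ξ₃ ξ₄ : Vp p) :
    gP p f P (highCurvatureOp p f k P ξ₁ ξ₂ η ξ₃) ξ₄ = nR p f k P ξ₁ ξ₂ ξ₃ ξ₄ η := by
  rw [highCurvatureOp, gP_smul_left, gP_dualWedgeXY, nR_of_le hk]
  ring

def IntertwinesCurvature (p : ℕ) (f : ℝ → ℝ) (P Q : Vp p) (φ : Vp p ≃ₗ[ℝ] Vp p) (k : ℕ) :
    Prop :=
  ∀ (opP opQ : Vp p → Vp p → (Fin k → Vp p) → Vp p → Vp p),
    (∀ (ξ₁ ξ₂ : Vp p) (η : Fin k → Vp p) (ξ₃ ξ₄ : Vp p),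
      gP p f P (opP ξ₁ ξ₂ η ξ₃) ξ₄ = nR p f k P ξ₁ ξ₂ ξ₃ ξ₄ η) →
    (∀ (ξ₁ ξ₂ : Vp p) (η : Fin k → Vp p) (ξ₃ ξ₄ : Vp p),
      gP p f Q (opQ ξ₁ ξ₂ η ξ₃) ξ₄ = nR p f k Q ξ₁ ξ₂ ξ₃ ξ₄ η) →
    ∀ (ξ₁ ξ₂ : Vp p) (η : Fin k → Vp p) (ξ₃ : Vp p),
      φ (opP ξ₁ ξ₂ η ξ₃) = opQ (φ ξ₁) (φ ξ₂) (fun j => φ (η j)) (φ ξ₃)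

lemma IntertwinesCurvature.smul_eq_smul {p k : ℕ} {f : ℝ → ℝ} {P Q : Vp p}
    {φ : Vp p ≃ₗ[ℝ] Vp p} (h : IntertwinesCurvature p f P Q φ k) (hk : p + 1 ≤ k) :
    iteratedDeriv (k + 2) f (P (iy p)) • φ (dualWedgeXY p (Pi.single (ix p) 1)) =
      (wdg p (ix p) (iy p) (φ (Pi.single (ix p) 1)) (φ (Pi.single (iy p) 1)) *
        iteratedDeriv (k + 2) f (Q (iy p)) * φ (Pi.single (iy p) 1) (iy p) ^ k) •
        dualWedgeXY p (φ (Pi.single (ix p) 1)) := by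
  have := h _ _ (gP_highCurvatureOp hk f P) (gP_highCurvatureOp hk f Q)
    (Pi.single (ix p) 1) (Pi.single (iy p) 1) (fun _ => Pi.single (iy p) 1) (Pi.single (ix p) 1)
  simpa [highCurvatureOp, wdg_single_ix_single_iy] using this

lemma div_eq_div_of_smul_eq_smul {K V : Type*} [Field K] [AddCommGroup V] [Module K V]
    {v w : V} {a b a' b' : K} (hv : v ≠ 0) (ha : a ≠ 0) (ha' : a' ≠ 0)
    (h : a • v = b • w) (h' : a' • v = b' • w) : b / a = b' / a' := by
  have hv₁ : v = (b / a) • w := by rw [div_eq_inv_mul, mul_smul, ← h, inv_smul_smul₀ ha]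
  have hv₂ : v = (b' / a') • w := by rw [div_eq_inv_mul, mul_smul, ← h', inv_smul_smul₀ ha']
  have hw : w ≠ 0 := by rintro rfl; exact hv (by simpa using hv₁)
  exact smul_left_injective K hw (hv₁.symm.trans hv₂)

lemma mul_div_sq_eq_of_mul_pow_eq {K : Type*} [Field K] {a₁ a₂ a₃ b₁ b₂ b₃ c t μ : K} {n : ℕ}
    (hμ : μ ≠ 0) (ha₂ : a₂ ≠ 0) (h₁ : c * b₁ * t ^ n = μ * a₁)
    (h₂ : c * b₂ * t ^ (n + 1) = μ * a₂) (h₃ : c * b₃ * t ^ (n + 2) = μ * a₃) :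
    a₁ * a₃ / a₂ ^ 2 = b₁ * b₃ / b₂ ^ 2 := by
  have hb₂ : b₂ ≠ 0 := by rintro rfl; simp_all
  rw [div_eq_div_iff (pow_ne_zero 2 ha₂) (pow_ne_zero 2 hb₂)]
  refine mul_left_cancel₀ (pow_ne_zero 2 hμ) ?_
  linear_combination -(b₂ ^ 2 * μ * a₃) * h₁ - (b₂ ^ 2 * c * b₁ * t ^ n) * h₃ +
    b₁ * b₃ * (c * b₂ * t ^ (n + 1) + μ * a₂) * h₂

noncomputable def curvatureRatio (p : ℕ) (f : ℝ → ℝ) (y : ℝ) : ℝ :=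
  iteratedDeriv (p + 3) f y * iteratedDeriv (p + 5) f y / (iteratedDeriv (p + 4) f y) ^ 2

theorem curvatureRatio_eq_of_intertwinesCurvature {p : ℕ} {f : ℝ → ℝ} {P Q : Vp p}
    (φ : Vp p ≃ₗ[ℝ] Vp p) (hf : ∀ n, p + 3 ≤ n → n ≤ p + 5 → iteratedDeriv n f (P (iy p)) ≠ 0)
    (hφ : ∀ k, p + 1 ≤ k → k ≤ p + 3 → IntertwinesCurvature p f P Q φ k) :
    curvatureRatio p f (P (iy p)) = curvatureRatio p f (Q (iy p)) := by
  set v := φ (dualWedgeXY p (Pi.single (ix p) 1))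
  set w := dualWedgeXY p (φ (Pi.single (ix p) 1))
  set c := wdg p (ix p) (iy p) (φ (Pi.single (ix p) 1)) (φ (Pi.single (iy p) 1))
  set t := φ (Pi.single (iy p) 1) (iy p)
  set a := fun n => iteratedDeriv n f (P (iy p))
  set b := fun n => iteratedDeriv n f (Q (iy p))
  have hv : v ≠ 0 := φ.map_ne_zero_iff.mpr (dualWedgeXY_single_ix_ne_zero p)
  have ha₁ : a (p + 3) ≠ 0 := hf (p + 3) le_rfl (by omega)
  have ha₂ : a (p + 4) ≠ 0 := hf (p + 4) (by omega) (by omega)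
  have ha₃ : a (p + 5) ≠ 0 := hf (p + 5) (by omega) le_rfl
  have h₁ : a (p + 3) • v = (c * b (p + 3) * t ^ (p + 1)) • w :=
    (hφ (p + 1) le_rfl (by omega)).smul_eq_smul le_rfl
  have h₂ : a (p + 4) • v = (c * b (p + 4) * t ^ (p + 2)) • w :=
    (hφ (p + 2) (by omega) (by omega)).smul_eq_smul (by omega)
  have h₃ : a (p + 5) • v = (c * b (p + 5) * t ^ (p + 3)) • w :=
    (hφ (p + 3) (by omega) le_rfl).smul_eq_smul (by omega)
  have hμ : c * b (p + 3) * t ^ (p + 1) / a (p + 3) ≠ 0 :=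
    div_ne_zero (fun h ↦ smul_ne_zero ha₁ hv (by rw [h₁, h, zero_smul])) ha₁
  have e₂ := div_eq_div_of_smul_eq_smul hv ha₁ ha₂ h₁ h₂
  have e₃ := div_eq_div_of_smul_eq_smul hv ha₁ ha₃ h₁ h₃
  exact mul_div_sq_eq_of_mul_pow_eq hμ ha₂ (div_mul_cancel₀ _ ha₁).symm
    ((div_eq_iff ha₂).mp e₂.symm) ((div_eq_iff ha₃).mp e₃.symm)

lemma iteratedDeriv_exp_add_exp_two_mul (n : ℕ) (y : ℝ) :
    iteratedDeriv n (fun y => exp y + exp (2 * y)) y = exp y + 2 ^ n * exp (2 * y) := by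
  rw [iteratedDeriv_fun_add (by fun_prop) (by fun_prop), iteratedDeriv_eq_iterate,
    Real.iter_deriv_exp, iteratedDeriv_exp_const_mul]

lemma curvatureRatio_exp_add_exp_two_mul_log (p : ℕ) {u : ℝ} (hu : 0 < u) :
    curvatureRatio p (fun y => exp y + exp (2 * y)) (log (u / 2 ^ (p + 3))) =
      (1 + u) * (1 + 4 * u) / (1 + 2 * u) ^ 2 := by
  simp only [curvatureRatio, iteratedDeriv_exp_add_exp_two_mul, two_mul (log _), exp_add,
    exp_log (by positivity : 0 < u / 2 ^ (p + 3))]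
  field_simp
  ring

lemma exists_curvatureRatio_exp_add_exp_two_mul_ne (p : ℕ) :
    ∃ y₁ y₂, curvatureRatio p (fun y => exp y + exp (2 * y)) y₁ ≠
      curvatureRatio p (fun y => exp y + exp (2 * y)) y₂ := by
  refine ⟨log (1 / 2 ^ (p + 3)), log (1 / 2 / 2 ^ (p + 3)), ?_⟩
  rw [curvatureRatio_exp_add_exp_two_mul_log p one_pos,
    curvatureRatio_exp_add_exp_two_mul_log p one_half_pos]
  norm_num

/-- for f(y) = e^y + e^{2y}, the invariant
α(y) = f^{(p+3)}(y) f^{(p+5)}(y) / (f^{(p+4)}(y))² is not constant; consequently there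
are points P, Q for which no linear isomorphism φ of ℝ^m intertwines the curvature
operators ∇^k𝓡_P and ∇^k𝓡_Q (the unique operators with
g(∇^k𝓡(ξ₁,ξ₂;η⃗)ξ₃, ξ₄) = ∇^kR(ξ₁,ξ₂,ξ₃,ξ₄;η⃗)) for all 0 ≤ k ≤ p+3: M²_{2p+6} is not
affine (p+3)-curvature homogeneous. -/
theorem M2_not_affine_homogeneous (p : ℕ) :
    (∃ y₁ y₂ : ℝ,
      iteratedDeriv (p+3) (fun y => Real.exp y + Real.exp (2*y)) y₁
          * iteratedDeriv (p+5) (fun y => Real.exp y + Real.exp (2*y)) y₁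
          / (iteratedDeriv (p+4) (fun y => Real.exp y + Real.exp (2*y)) y₁)^2
      ≠ iteratedDeriv (p+3) (fun y => Real.exp y + Real.exp (2*y)) y₂
          * iteratedDeriv (p+5) (fun y => Real.exp y + Real.exp (2*y)) y₂
          / (iteratedDeriv (p+4) (fun y => Real.exp y + Real.exp (2*y)) y₂)^2) ∧
    (∃ P Q : Vp p, ¬ ∃ φ : Vp p ≃ₗ[ℝ] Vp p, ∀ k : ℕ, k ≤ p+3 →
      ∀ (opP opQ : Vp p → Vp p → (Fin k → Vp p) → Vp p → Vp p),
        (∀ (ξ₁ ξ₂ : Vp p) (η : Fin k → Vp p) (ξ₃ ξ₄ : Vp p),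
          gP p (fun y => Real.exp y + Real.exp (2*y)) P (opP ξ₁ ξ₂ η ξ₃) ξ₄
            = nR p (fun y => Real.exp y + Real.exp (2*y)) k P ξ₁ ξ₂ ξ₃ ξ₄ η) →
        (∀ (ξ₁ ξ₂ : Vp p) (η : Fin k → Vp p) (ξ₃ ξ₄ : Vp p),
          gP p (fun y => Real.exp y + Real.exp (2*y)) Q (opQ ξ₁ ξ₂ η ξ₃) ξ₄
            = nR p (fun y => Real.exp y + Real.exp (2*y)) k Q ξ₁ ξ₂ ξ₃ ξ₄ η) →
        ∀ (ξ₁ ξ₂ : Vp p) (η : Fin k → Vp p) (ξ₃ : Vp p),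
          φ (opP ξ₁ ξ₂ η ξ₃) = opQ (φ ξ₁) (φ ξ₂) (fun j => φ (η j)) (φ ξ₃)) := by
  obtain ⟨y₁, y₂, hne⟩ := exists_curvatureRatio_exp_add_exp_two_mul_ne p
  refine ⟨⟨y₁, y₂, hne⟩, fun _ => y₁, fun _ => y₂, fun ⟨φ, hφ⟩ => hne ?_⟩
  refine curvatureRatio_eq_of_intertwinesCurvature (P := fun _ => y₁) (Q := fun _ => y₂) φ
    (fun n _ _ => ?_) fun k _ hk => hφ k hk
  rw [iteratedDeriv_exp_add_exp_two_mul]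
  positivity
end

section
/- There is no direct sum decomposition ℝ³ = V₁ ⊕ V₂ with V₁ ≠ {0} and V₂ ≠ {0} such that B(ξ₁, ξ₂, ξ₃, ξ₄) = 0 whenever the four arguments ξ₁, ξ₂, ξ₃, ξ₄ do not all lie in V₁ or all lie in V₂ (i.e. whenever B does not restrict to a direct sum B = B₁ ⊕ B₂). In other words, the affine model 𝒱 = (ℝ³, B) is irreducible. -/
/-- wedge component on ℝ³: (u ∧ v)_{ab} = u_a v_b - u_b v_a. -/
def w3 (a b : Fin 3) (u v : Fin 3 → ℝ) : ℝ := u a * v b - u b * v a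

/-- The 4-linear form B on ℝ³ (standard basis X = e₀, Y = e₁, Z = e₂): antisymmetric
in its first two and in its last two arguments, symmetric under interchanging the two
pairs, and whose only nonzero components on basis vectors up to these symmetries are
given by B(X,Y,Z,X) = 1.  This is its explicit multilinear expression. -/
def B3 (ξ₁ ξ₂ ξ₃ ξ₄ : Fin 3 → ℝ) : ℝ :=
  -(w3 0 1 ξ₁ ξ₂ * w3 0 2 ξ₃ ξ₄ + w3 0 2 ξ₁ ξ₂ * w3 0 1 ξ₃ ξ₄)

/-!
If `B` splits along `ℝ³ = V₁ ⊕ V₂`, then for `u ∈ V₁`, `v ∈ V₂` the mixed values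
`B(u, v, Z, X) = (u ∧ v)₀₁` and `B(u, v, X, Y) = -(u ∧ v)₀₂` vanish, so `u` and `v` are
proportional as soon as `u₀ ≠ 0`. Writing `X = a + b` with `a ∈ V₁`, `b ∈ V₂`, one of
`a₀, b₀` is nonzero, and then every vector of the other summand is a multiple of it,
hence lies in both summands and is zero.
-/

lemma B3_apply_Z_X (u v : Fin 3 → ℝ) : B3 u v ![0, 0, 1] ![1, 0, 0] = w3 0 1 u v := by
  simp [B3, w3]

lemma B3_apply_X_Y (u v : Fin 3 → ℝ) : B3 u v ![1, 0, 0] ![0, 1, 0] = -w3 0 2 u v := by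
  simp [B3, w3]

lemma eq_smul_of_forall_mul_eq {ι K : Type*} [Field K] {u v : ι → K} {i₀ : ι}
    (hu : u i₀ ≠ 0) (h : ∀ i, u i₀ * v i = u i * v i₀) : v = (v i₀ / u i₀) • u := by
  funext i
  rw [Pi.smul_apply, smul_eq_mul, div_mul_eq_mul_div, eq_div_iff hu, mul_comm, h, mul_comm]

def B3SplitsAlong (V₁ V₂ : Submodule ℝ (Fin 3 → ℝ)) : Prop :=
  ∀ ξ₁ ξ₂ ξ₃ ξ₄ : Fin 3 → ℝ,
    ¬ ((ξ₁ ∈ V₁ ∧ ξ₂ ∈ V₁ ∧ ξ₃ ∈ V₁ ∧ ξ₄ ∈ V₁) ∨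
       (ξ₁ ∈ V₂ ∧ ξ₂ ∈ V₂ ∧ ξ₃ ∈ V₂ ∧ ξ₄ ∈ V₂)) →
    B3 ξ₁ ξ₂ ξ₃ ξ₄ = 0

namespace B3SplitsAlong

variable {V₁ V₂ : Submodule ℝ (Fin 3 → ℝ)}

lemma symm (h : B3SplitsAlong V₁ V₂) : B3SplitsAlong V₂ V₁ :=
  fun ξ₁ ξ₂ ξ₃ ξ₄ hmixed => h ξ₁ ξ₂ ξ₃ ξ₄ (hmixed ∘ Or.symm)

lemma mul_eq_mul (h : B3SplitsAlong V₁ V₂) (hdisj : Disjoint V₁ V₂)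
    {u v : Fin 3 → ℝ} (hu : u ∈ V₁) (hv : v ∈ V₂) (i : Fin 3) :
    u 0 * v i = u i * v 0 := by
  rcases eq_or_ne u 0 with rfl | hu0
  · simp
  rcases eq_or_ne v 0 with rfl | hv0
  · simp
  have hmixed : ∀ ξ₃ ξ₄ : Fin 3 → ℝ, B3 u v ξ₃ ξ₄ = 0 := by
    refine fun ξ₃ ξ₄ => h u v ξ₃ ξ₄ ?_
    rintro (⟨-, hv₁, -⟩ | ⟨hu₂, -⟩)
    · exact hv0 (Submodule.disjoint_def.mp hdisj v hv₁ hv)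
    · exact hu0 (Submodule.disjoint_def.mp hdisj u hu hu₂)
  have h01 := hmixed ![0, 0, 1] ![1, 0, 0]
  have h02 := hmixed ![1, 0, 0] ![0, 1, 0]
  rw [B3_apply_Z_X, w3] at h01
  rw [B3_apply_X_Y, w3, neg_eq_zero] at h02
  fin_cases i
  · rfl
  · exact sub_eq_zero.mp h01
  · exact sub_eq_zero.mp h02

lemma eq_bot_of_mem_apply_zero_ne_zero (h : B3SplitsAlong V₁ V₂) (hdisj : Disjoint V₁ V₂)
    {u : Fin 3 → ℝ} (hu : u ∈ V₁) (hu0 : u 0 ≠ 0) : V₂ = ⊥ := by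
  refine (Submodule.eq_bot_iff V₂).mpr fun v hv => ?_
  have hv_eq : v = (v 0 / u 0) • u := eq_smul_of_forall_mul_eq hu0 (h.mul_eq_mul hdisj hu hv)
  have hv₁ : v ∈ V₁ := hv_eq ▸ V₁.smul_mem _ hu
  exact Submodule.disjoint_def.mp hdisj v hv₁ hv

end B3SplitsAlong

/-- the affine model 𝒱 = (ℝ³, B) is irreducible: there is no direct sum
decomposition ℝ³ = V₁ ⊕ V₂ with V₁ ≠ 0 and V₂ ≠ 0 such that B vanishes whenever its
four arguments do not all lie in V₁ or all lie in V₂. -/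
theorem affine_model_irreducible :
    ¬ ∃ (V₁ V₂ : Submodule ℝ (Fin 3 → ℝ)), V₁ ≠ ⊥ ∧ V₂ ≠ ⊥ ∧
      V₁ ⊓ V₂ = ⊥ ∧ V₁ ⊔ V₂ = ⊤ ∧
      (∀ ξ₁ ξ₂ ξ₃ ξ₄ : Fin 3 → ℝ,
        ¬ ((ξ₁ ∈ V₁ ∧ ξ₂ ∈ V₁ ∧ ξ₃ ∈ V₁ ∧ ξ₄ ∈ V₁) ∨
           (ξ₁ ∈ V₂ ∧ ξ₂ ∈ V₂ ∧ ξ₃ ∈ V₂ ∧ ξ₄ ∈ V₂)) →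
        B3 ξ₁ ξ₂ ξ₃ ξ₄ = 0) := by
  rintro ⟨V₁, V₂, hV₁, hV₂, hinf, hsup, h : B3SplitsAlong V₁ V₂⟩
  have hdisj : Disjoint V₁ V₂ := disjoint_iff.mpr hinf
  obtain ⟨a, ha, b, hb, hab⟩ :=
    Submodule.mem_sup.mp (hsup ▸ Submodule.mem_top : (![1, 0, 0] : Fin 3 → ℝ) ∈ V₁ ⊔ V₂)
  have hab0 : a 0 + b 0 = 1 := by simpa using congrFun hab 0
  by_cases ha0 : a 0 = 0
  · have hb0 : b 0 ≠ 0 := by intro hb0; simp [ha0, hb0] at hab0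
    exact hV₁ (h.symm.eq_bot_of_mem_apply_zero_ne_zero hdisj.symm hb hb0)
  · exact hV₂ (h.eq_bot_of_mem_apply_zero_ne_zero hdisj ha ha0)
end

section
/- The subspace 𝒦 := {ξ ∈ ℝ⁶ : A(η₁, η₂, η₃, ξ) = 0 for all η₁, η₂, η₃ ∈ ℝ⁶} is exactly the span of {X̄, Ȳ, Z̄}. -/
/-- wedge component on ℝ⁶: (u ∧ v)_{ab} = u_a v_b - u_b v_a. -/
def w6 (a b : Fin 6) (u v : Fin 6 → ℝ) : ℝ := u a * v b - u b * v a

/-- The 4-linear form A = A⁰₆ on ℝ⁶ (standard basis X = e₀, Y = e₁, Z = e₂, X̄ = e₃,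
Ȳ = e₄, Z̄ = e₅): antisymmetric in its first two and in its last two arguments,
symmetric under interchanging the two pairs, and whose only nonzero components on basis
vectors up to these symmetries are given by A(X,Y,Z,X) = 1.  This is its explicit
multilinear expression. -/
def A6 (ξ₁ ξ₂ ξ₃ ξ₄ : Fin 6 → ℝ) : ℝ :=
  -(w6 0 1 ξ₁ ξ₂ * w6 0 2 ξ₃ ξ₄ + w6 0 2 ξ₁ ξ₂ * w6 0 1 ξ₃ ξ₄)

lemma mem_span_bars_iff (ξ : Fin 6 → ℝ) :
    ξ ∈ Submodule.span ℝ
        ({Pi.single 3 1, Pi.single 4 1, Pi.single 5 1} : Set (Fin 6 → ℝ)) ↔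
      ξ 0 = 0 ∧ ξ 1 = 0 ∧ ξ 2 = 0 := by
  constructor
  · intro h
    induction h using Submodule.span_induction with
    | mem x hx =>
      rcases hx with rfl | rfl | rfl <;>
        refine ⟨?_, ?_, ?_⟩ <;> simp [Pi.single_apply]
    | zero => simp
    | add x y _ _ hx hy =>
      exact ⟨by simp [hx.1, hy.1], by simp [hx.2.1, hy.2.1], by simp [hx.2.2, hy.2.2]⟩
    | smul a x _ hx =>
      exact ⟨by simp [hx.1], by simp [hx.2.1], by simp [hx.2.2]⟩
  · rintro ⟨h0, h1, h2⟩
    have hξ : ξ = ξ 3 • (Pi.single 3 1 : Fin 6 → ℝ) + ξ 4 • (Pi.single 4 1 : Fin 6 → ℝ) + ξ 5 • (Pi.single 5 1 : Fin 6 → ℝ) := by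
      funext i
      fin_cases i <;> simp [Pi.single_apply, h0, h1, h2]
    rw [hξ]
    refine Submodule.add_mem _ (Submodule.add_mem _ ?_ ?_) ?_ <;>
      exact Submodule.smul_mem _ _ (Submodule.subset_span (by simp))

/-- the kernel 𝒦 = {ξ : A(η₁,η₂,η₃,ξ) = 0 for all η₁,η₂,η₃} is exactly
span{X̄, Ȳ, Z̄}. -/
theorem kernel_is_span_of_bars :
    {ξ : Fin 6 → ℝ | ∀ η₁ η₂ η₃ : Fin 6 → ℝ, A6 η₁ η₂ η₃ ξ = 0}
      = ↑(Submodule.span ℝ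
          ({Pi.single 3 1, Pi.single 4 1, Pi.single 5 1} : Set (Fin 6 → ℝ))) := by
  ext ξ
  simp only [Set.mem_setOf_eq, SetLike.mem_coe, mem_span_bars_iff]
  constructor
  · intro h
    have h2 := h (Pi.single 0 1) (Pi.single 1 1) (Pi.single 0 1)
    have h0 := h (Pi.single 0 1) (Pi.single 1 1) (Pi.single 2 1)
    have h1 := h (Pi.single 0 1) (Pi.single 2 1) (Pi.single 0 1)
    simp [A6, w6, Pi.single_apply] at h0 h1 h2
    exact ⟨h0, h1, h2⟩
  · rintro ⟨h0, h1, h2⟩ η₁ η₂ η₃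
    simp [A6, w6, h0, h1, h2]
end

section
/- There is no direct sum decomposition ℝ⁶ = V₁ ⊕ V₂ with V₁ ≠ {0} and V₂ ≠ {0} such that both (i) g₆(v₁, v₂) = 0 for all v₁ ∈ V₁ and v₂ ∈ V₂, and (ii) A(ξ₁, ξ₂, ξ₃, ξ₄) = 0 whenever the four arguments do not all lie in V₁ or all lie in V₂. In other words, the 0-model 𝒰⁶₀ = (ℝ⁶, g₆, A) is irreducible; in particular the complete symmetric space M_{6,0} on which M_{6,f} is 0-modeled is an irreducible neutral signature symmetric space. -/
/-- The inner product g₆ on ℝ⁶ with nonzero components g₆(X,X̄)=g₆(Y,Ȳ)=g₆(Z,Z̄)=1. -/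
def g6 (u v : Fin 6 → ℝ) : ℝ :=
  u 0 * v 3 + u 3 * v 0 + u 1 * v 4 + u 4 * v 1 + u 2 * v 5 + u 5 * v 2

private lemma g6_comm (u v : Fin 6 → ℝ) : g6 u v = g6 v u := by unfold g6; ring

private lemma key (V₁ V₂ : Submodule ℝ (Fin 6 → ℝ))
    (hinf : V₁ ⊓ V₂ = ⊥) (hsup : V₁ ⊔ V₂ = ⊤)
    (hg : ∀ v₁ ∈ V₁, ∀ v₂ ∈ V₂, g6 v₁ v₂ = 0)
    (hA : ∀ ξ₁ ξ₂ ξ₃ ξ₄ : Fin 6 → ℝ,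
        ¬ ((ξ₁ ∈ V₁ ∧ ξ₂ ∈ V₁ ∧ ξ₃ ∈ V₁ ∧ ξ₄ ∈ V₁) ∨
           (ξ₁ ∈ V₂ ∧ ξ₂ ∈ V₂ ∧ ξ₃ ∈ V₂ ∧ ξ₄ ∈ V₂)) →
        A6 ξ₁ ξ₂ ξ₃ ξ₄ = 0)
    (v : Fin 6 → ℝ) (hv : v ∈ V₁) (hv0 : v 0 ≠ 0) : V₂ = ⊥ := by
  have hbot : ∀ x, x ∈ V₁ → x ∈ V₂ → x = 0 := by
    intro x h1 h2
    have : x ∈ V₁ ⊓ V₂ := ⟨h1, h2⟩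
    rw [hinf] at this
    simpa using this
  have hvV2 : v ∉ V₂ := by
    intro h
    exact hv0 (by rw [hbot v hv h]; rfl)
  -- Claim C: for every u ∈ V₂, π(u) is proportional to π(v)
  have C : ∀ u ∈ V₂, v 0 * u 1 - v 1 * u 0 = 0 ∧ v 0 * u 2 - v 2 * u 0 = 0 := by
    intro u hu
    by_cases huV1 : u ∈ V₁
    · have h0 := hbot u huV1 hu
      subst h0
      simp
    · have hcond : ¬ ((v ∈ V₁ ∧ u ∈ V₁ ∧ (fun j : Fin 6 => if j = 0 then (1:ℝ) else 0) ∈ V₁ ∧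
          (fun j : Fin 6 => if j = 2 then (1:ℝ) else 0) ∈ V₁) ∨
          (v ∈ V₂ ∧ u ∈ V₂ ∧ (fun j : Fin 6 => if j = 0 then (1:ℝ) else 0) ∈ V₂ ∧
          (fun j : Fin 6 => if j = 2 then (1:ℝ) else 0) ∈ V₂)) := by
        rintro (⟨_, h, _⟩ | ⟨h, _⟩)
        exacts [huV1 h, hvV2 h]
      have hcond' : ¬ ((v ∈ V₁ ∧ u ∈ V₁ ∧ (fun j : Fin 6 => if j = 0 then (1:ℝ) else 0) ∈ V₁ ∧
          (fun j : Fin 6 => if j = 1 then (1:ℝ) else 0) ∈ V₁) ∨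
          (v ∈ V₂ ∧ u ∈ V₂ ∧ (fun j : Fin 6 => if j = 0 then (1:ℝ) else 0) ∈ V₂ ∧
          (fun j : Fin 6 => if j = 1 then (1:ℝ) else 0) ∈ V₂)) := by
        rintro (⟨_, h, _⟩ | ⟨h, _⟩)
        exacts [huV1 h, hvV2 h]
      have h01 := hA v u _ _ hcond
      have h02 := hA v u _ _ hcond'
      simp [A6, w6] at h01 h02
      constructor <;> linarith
  -- build elements of V₁ with prescribed first three coordinates
  have build : ∀ x : Fin 6 → ℝ, ∃ a ∈ V₁, a 0 = x 0 ∧ a 1 = x 1 ∧ a 2 = x 2 := by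
    intro x
    have hx : x ∈ V₁ ⊔ V₂ := hsup ▸ Submodule.mem_top
    obtain ⟨p, hp, q, hq, hpq⟩ := Submodule.mem_sup.mp hx
    obtain ⟨hC1, hC2⟩ := C q hq
    have h0 := congrFun hpq 0
    have h1 := congrFun hpq 1
    have h2 := congrFun hpq 2
    simp only [Pi.add_apply] at h0 h1 h2
    have hq0 : q 0 / v 0 * v 0 = q 0 := div_mul_cancel₀ _ hv0
    have hq1 : q 0 / v 0 * v 1 = q 1 := by field_simp; linear_combination -hC1
    have hq2 : q 0 / v 0 * v 2 = q 2 := by field_simp; linear_combination -hC2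
    refine ⟨p + (q 0 / v 0) • v, V₁.add_mem hp (V₁.smul_mem _ hv), ?_, ?_, ?_⟩ <;>
      simp only [Pi.add_apply, Pi.smul_apply, smul_eq_mul]
    · rw [hq0]; exact h0
    · rw [hq1]; exact h1
    · rw [hq2]; exact h2
  obtain ⟨a, ha, ha0, ha1, ha2⟩ := build (fun j => if j = 0 then (1:ℝ) else 0)
  obtain ⟨b, hb, hb0, hb1, hb2⟩ := build (fun j => if j = 1 then (1:ℝ) else 0)
  obtain ⟨c, hc, hc0, hc1, hc2⟩ := build (fun j => if j = 2 then (1:ℝ) else 0)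
  simp only [show ((0:Fin 6) = 0) = True from by simp, show ((1:Fin 6) = 0) = False from by simp,
    show ((2:Fin 6) = 0) = False from by simp, show ((0:Fin 6) = 1) = False from by simp,
    show ((1:Fin 6) = 1) = True from by simp, show ((2:Fin 6) = 1) = False from by simp,
    show ((0:Fin 6) = 2) = False from by simp, show ((1:Fin 6) = 2) = False from by simp,
    show ((2:Fin 6) = 2) = True from by simp, if_true, if_false] at ha0 ha1 ha2 hb0 hb1 hb2 hc0 hc1 hc2
  have haV2 : a ∉ V₂ := by
    intro h
    have := hbot a ha h
    rw [this] at ha0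
    norm_num at ha0
  rw [Submodule.eq_bot_iff]
  intro u hu
  by_cases huV1 : u ∈ V₁
  · exact hbot u huV1 hu
  · have mk : ∀ ξ₂ ξ₃ : Fin 6 → ℝ, A6 a ξ₂ ξ₃ u = 0 := by
      intro ξ₂ ξ₃
      refine hA a ξ₂ ξ₃ u ?_
      rintro (⟨_, _, _, h⟩ | ⟨h, _⟩)
      exacts [huV1 h, haV2 h]
    have h1 := mk b a
    have h2 := mk c a
    have h3 := mk c b
    simp [A6, w6, ha0, ha1, ha2, hb0, hb1, hb2, hc0, hc1, hc2] at h1 h2 h3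
    have hu2 : u 2 = 0 := by linarith
    have hu1 : u 1 = 0 := by linarith
    have hu0 : u 0 = 0 := by linarith
    have hga := hg a ha u hu
    have hgb := hg b hb u hu
    have hgc := hg c hc u hu
    simp [g6, ha0, ha1, ha2, hb0, hb1, hb2, hc0, hc1, hc2, hu0, hu1, hu2] at hga hgb hgc
    have hu3 : u 3 = 0 := by linarith
    have hu4 : u 4 = 0 := by linarith
    have hu5 : u 5 = 0 := by linarith
    funext i
    fin_cases i <;> first | exact hu0 | exact hu1 | exact hu2 | exact hu3 | exact hu4 | exact hu5

/-- the 0-model 𝒰⁶₀ = (ℝ⁶, g₆, A) is irreducible: there is no direct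
sum decomposition ℝ⁶ = V₁ ⊕ V₂ with V₁ ≠ 0 and V₂ ≠ 0 such that g₆(V₁,V₂) = 0 and A
vanishes whenever its four arguments do not all lie in V₁ or all lie in V₂. -/
theorem model_U60_irreducible :
    ¬ ∃ (V₁ V₂ : Submodule ℝ (Fin 6 → ℝ)), V₁ ≠ ⊥ ∧ V₂ ≠ ⊥ ∧
      V₁ ⊓ V₂ = ⊥ ∧ V₁ ⊔ V₂ = ⊤ ∧
      (∀ v₁ ∈ V₁, ∀ v₂ ∈ V₂, g6 v₁ v₂ = 0) ∧
      (∀ ξ₁ ξ₂ ξ₃ ξ₄ : Fin 6 → ℝ,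
        ¬ ((ξ₁ ∈ V₁ ∧ ξ₂ ∈ V₁ ∧ ξ₃ ∈ V₁ ∧ ξ₄ ∈ V₁) ∨
           (ξ₁ ∈ V₂ ∧ ξ₂ ∈ V₂ ∧ ξ₃ ∈ V₂ ∧ ξ₄ ∈ V₂)) →
        A6 ξ₁ ξ₂ ξ₃ ξ₄ = 0) := by
  rintro ⟨V₁, V₂, h1, h2, hinf, hsup, hg, hA⟩
  have hx : (fun j : Fin 6 => if j = 0 then (1:ℝ) else 0) ∈ V₁ ⊔ V₂ :=
    hsup ▸ Submodule.mem_top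
  obtain ⟨p, hp, q, hq, hpq⟩ := Submodule.mem_sup.mp hx
  have h0 := congrFun hpq 0
  simp only [Pi.add_apply] at h0
  norm_num at h0
  by_cases hp0 : p 0 ≠ 0
  · exact h2 (key V₁ V₂ hinf hsup hg hA p hp hp0)
  · have hq0 : q 0 ≠ 0 := by
      push_neg at hp0
      intro h
      rw [hp0, h] at h0
      norm_num at h0
    refine h1 (key V₂ V₁ ?_ ?_ ?_ ?_ q hq hq0)
    · rw [inf_comm]; exact hinf
    · rw [sup_comm]; exact hsup
    · intro a ha b hb
      rw [g6_comm]
      exact hg b hb a ha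
    · intro ξ₁ ξ₂ ξ₃ ξ₄ h
      exact hA ξ₁ ξ₂ ξ₃ ξ₄ (by tauto)
end
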